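/- arXiv:2010.13548 — 8 statements merged into one kernel-verified Lean document; each statement's English description precedes it below -/
import Mathlib

section
/- Let P and Q be Borel probability measures on the real line with means m_P, m_Q and variances σ_P², σ_Q² respectively, and suppose m_P ≠ m_Q. Set a := m_P − m_Q. Then the squared Hellinger distance satisfies H²(P,Q) ≥ 1 − √(1 − a²/(a² + (σ_P + σ_Q)²)). -/
open MeasureTheory Real

/-- The squared Hellinger distance `H²(P,Q) = (1/2)∫(√p − √q)² dμ`, computed with
respect to the dominating measure `μ = P + Q` (the value is independent of the choice
of dominating measure). -/
noncomputable def hellingerSq (P Q : Measure ℝ) : ℝ :=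
  (1 / 2) * ∫ x, (Real.sqrt ((P.rnDeriv (P + Q)) x).toReal
      - Real.sqrt ((Q.rnDeriv (P + Q)) x).toReal) ^ 2 ∂(P + Q)

/-!
With `u = √(dP/dμ)`, `v = √(dQ/dμ)` in `L²(μ)`, `μ = P + Q`, and `ρ = ⟪u, v⟫`, one has
`H²(P, Q) = 1 - ρ`. The centred vectors `f = (x - m_P) u` and `g = (x - m_Q) v` have norms
`σ_P`, `σ_Q`, satisfy `f ⟂ u`, `g ⟂ v`, and `⟪g, u⟫ - ⟪f, v⟫ = (m_P - m_Q) ρ`.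
As `f ⟂ u`, `⟪f, v⟫ = ⟪f, v - ρ u⟫` with `‖v - ρ u‖ = √(1 - ρ²)`, and symmetrically for `g`,
so Cauchy–Schwarz gives `|m_P - m_Q| ρ ≤ (σ_P + σ_Q) √(1 - ρ²)`, which rearranges to the bound.
-/

open scoped InnerProductSpace

section InnerProductSpace

variable {E : Type*} [NormedAddCommGroup E] [InnerProductSpace ℝ E]

lemma abs_real_inner_le_of_inner_eq_zero {u v f : E} (hu : ‖u‖ = 1) (hv : ‖v‖ = 1)
    (hfu : ⟪f, u⟫_ℝ = 0) : |⟪f, v⟫_ℝ| ≤ ‖f‖ * √(1 - ⟪u, v⟫_ℝ ^ 2) := by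
  have hproj : ⟪f, v⟫_ℝ = ⟪f, v - ⟪u, v⟫_ℝ • u⟫_ℝ := by
    rw [inner_sub_right, real_inner_smul_right, hfu, mul_zero, sub_zero]
  have hnorm : ‖v - ⟪u, v⟫_ℝ • u‖ = √(1 - ⟪u, v⟫_ℝ ^ 2) := by
    rw [← Real.sqrt_sq (norm_nonneg _), norm_sub_sq_real, real_inner_smul_right, norm_smul,
      real_inner_comm, hu, hv, Real.norm_eq_abs, mul_one, sq_abs]
    ring_nf
  rw [hproj, ← hnorm]
  exact abs_real_inner_le_norm _ _

lemma abs_inner_sub_inner_le {u v f g : E} (hu : ‖u‖ = 1) (hv : ‖v‖ = 1)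
    (hfu : ⟪f, u⟫_ℝ = 0) (hgv : ⟪g, v⟫_ℝ = 0) :
    |⟪g, u⟫_ℝ - ⟪f, v⟫_ℝ| ≤ (‖f‖ + ‖g‖) * √(1 - ⟪u, v⟫_ℝ ^ 2) := by
  have hg := abs_real_inner_le_of_inner_eq_zero hv hu hgv
  rw [real_inner_comm u v] at hg
  calc |⟪g, u⟫_ℝ - ⟪f, v⟫_ℝ| ≤ |⟪g, u⟫_ℝ| + |⟪f, v⟫_ℝ| := abs_sub _ _
    _ ≤ _ := by linarith [abs_real_inner_le_of_inner_eq_zero hu hv hfu]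

end InnerProductSpace

lemma le_sqrt_one_sub_div_of_abs_mul_le {a s ρ : ℝ} (hρ0 : 0 ≤ ρ) (hρ1 : ρ ≤ 1)
    (h : |a| * ρ ≤ s * √(1 - ρ ^ 2)) : ρ ≤ √(1 - a ^ 2 / (a ^ 2 + s ^ 2)) := by
  have hsq : a ^ 2 * ρ ^ 2 ≤ s ^ 2 * (1 - ρ ^ 2) := by
    have := pow_le_pow_left₀ (by positivity) h 2
    rwa [mul_pow, mul_pow, sq_abs, Real.sq_sqrt (by nlinarith)] at this
  refine Real.le_sqrt_of_sq_le ?_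
  rcases (add_nonneg (sq_nonneg a) (sq_nonneg s)).eq_or_lt with hD | hD
  · rw [← hD, div_zero, sub_zero]
    nlinarith
  · rw [le_sub_comm, div_le_iff₀ hD]
    linarith

section L2

variable {α : Type*} [MeasurableSpace α] {μ : Measure α}

lemma inner_eq_integral_mul_of_ae_eq {F G : Lp ℝ 2 μ} {f g : α → ℝ}
    (hF : F =ᵐ[μ] f) (hG : G =ᵐ[μ] g) : ⟪F, G⟫_ℝ = ∫ x, f x * g x ∂μ := by
  rw [L2.inner_def]
  refine integral_congr_ae ?_
  filter_upwards [hF, hG] with x hFx hGx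
  rw [Real.inner_apply, hFx, hGx]

noncomputable def sqrtDensity (P μ : Measure α) (x : α) : ℝ := √(P.rnDeriv μ x).toReal

lemma sqrtDensity_sq (P μ : Measure α) (x : α) :
    sqrtDensity P μ x ^ 2 = (P.rnDeriv μ x).toReal :=
  Real.sq_sqrt ENNReal.toReal_nonneg

lemma measurable_sqrtDensity (P μ : Measure α) : Measurable (sqrtDensity P μ) :=
  (Measure.measurable_rnDeriv P μ).ennreal_toReal.sqrt

variable {P : Measure α} [SigmaFinite P] [SigmaFinite μ]

lemma memLp_two_mul_sqrtDensity (hP : P ≪ μ) {h : α → ℝ} (hh : AEStronglyMeasurable h μ)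
    (h2 : Integrable (fun x => h x ^ 2) P) :
    MemLp (fun x => h x * sqrtDensity P μ x) 2 μ := by
  refine (memLp_two_iff_integrable_sq
    (hh.mul (measurable_sqrtDensity P μ).aestronglyMeasurable)).2 ?_
  refine ((integrable_toReal_rnDeriv_mul_iff hP).2 h2).congr (ae_of_all _ fun x => ?_)
  dsimp only [Pi.mul_apply]
  rw [mul_pow, sqrtDensity_sq, mul_comm]

lemma inner_eq_integral_of_ae_eq_mul_sqrtDensity (hP : P ≪ μ) {F G : Lp ℝ 2 μ} {h k : α → ℝ}
    (hF : F =ᵐ[μ] fun x => h x * sqrtDensity P μ x)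
    (hG : G =ᵐ[μ] fun x => k x * sqrtDensity P μ x) :
    ⟪F, G⟫_ℝ = ∫ x, h x * k x ∂P := by
  rw [inner_eq_integral_mul_of_ae_eq hF hG, ← integral_toReal_rnDeriv_mul hP]
  refine integral_congr_ae (ae_of_all _ fun x => ?_)
  dsimp only
  rw [← sqrtDensity_sq]
  ring

end L2

lemma inner_sub_inner_eq_sub_mul_inner {μ : Measure ℝ} {U V F G : Lp ℝ 2 μ} {u v : ℝ → ℝ}
    {a b : ℝ} (hU : U =ᵐ[μ] u) (hV : V =ᵐ[μ] v) (hF : F =ᵐ[μ] fun x => (x - a) * u x)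
    (hG : G =ᵐ[μ] fun x => (x - b) * v x) :
    ⟪G, U⟫_ℝ - ⟪F, V⟫_ℝ = (a - b) * ⟪U, V⟫_ℝ := by
  rw [L2.inner_def, L2.inner_def, L2.inner_def,
    ← integral_sub (L2.integrable_inner G U) (L2.integrable_inner F V), ← integral_const_mul]
  refine integral_congr_ae ?_
  filter_upwards [hU, hV, hF, hG] with x hUx hVx hFx hGx
  simp only [Real.inner_apply, hUx, hVx, hFx, hGx]
  ring

lemma exists_L2_sqrtDensity_centered (μ : Measure ℝ) [SigmaFinite μ] (P : Measure ℝ)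
    [IsProbabilityMeasure P] (hP : P ≪ μ) {m σ : ℝ} (hσ : 0 ≤ σ)
    (h2 : Integrable (fun x => x ^ 2) P) (hm : ∫ x, x ∂P = m)
    (hv : ∫ x, (x - m) ^ 2 ∂P = σ ^ 2) :
    ∃ U F : Lp ℝ 2 μ, U =ᵐ[μ] sqrtDensity P μ ∧
      F =ᵐ[μ] (fun x => (x - m) * sqrtDensity P μ x) ∧
      ‖U‖ = 1 ∧ ‖F‖ = σ ∧ ⟪F, U⟫_ℝ = 0 := by
  have hX : MemLp (fun x : ℝ => x) 2 P :=
    (memLp_two_iff_integrable_sq aestronglyMeasurable_id).2 h2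
  have hU := memLp_two_mul_sqrtDensity hP aestronglyMeasurable_const
    (integrable_const ((1 : ℝ) ^ 2))
  have hc : MemLp (fun x : ℝ => x - m) 2 P := hX.sub (memLp_const m)
  have hF := memLp_two_mul_sqrtDensity hP (by fun_prop) hc.integrable_sq
  refine ⟨hU.toLp _, hF.toLp _, hU.coeFn_toLp.mono fun x hx => hx.trans (one_mul _),
    hF.coeFn_toLp, ?_, ?_, ?_⟩
  · rw [← sq_eq_sq₀ (norm_nonneg _) zero_le_one, ← real_inner_self_eq_norm_sq,
      inner_eq_integral_of_ae_eq_mul_sqrtDensity hP hU.coeFn_toLp hU.coeFn_toLp]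
    simp
  · rw [← sq_eq_sq₀ (norm_nonneg _) hσ, ← real_inner_self_eq_norm_sq,
      inner_eq_integral_of_ae_eq_mul_sqrtDensity hP hF.coeFn_toLp hF.coeFn_toLp, ← hv]
    simp only [← sq]
  · rw [inner_eq_integral_of_ae_eq_mul_sqrtDensity hP hF.coeFn_toLp hU.coeFn_toLp]
    simp only [mul_one]
    rw [integral_sub (hX.integrable one_le_two) (integrable_const m), hm]
    simp

lemma hellingerSq_eq_one_sub_inner (P Q : Measure ℝ) {U V : Lp ℝ 2 (P + Q)}
    (hU : U =ᵐ[P + Q] sqrtDensity P (P + Q)) (hV : V =ᵐ[P + Q] sqrtDensity Q (P + Q))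
    (hU1 : ‖U‖ = 1) (hV1 : ‖V‖ = 1) : hellingerSq P Q = 1 - ⟪U, V⟫_ℝ := by
  have hUV : ⇑(U - V) =ᵐ[P + Q] fun x => sqrtDensity P (P + Q) x - sqrtDensity Q (P + Q) x :=
    (Lp.coeFn_sub U V).trans (hU.sub hV)
  calc hellingerSq P Q = 1 / 2 * ⟪U - V, U - V⟫_ℝ := by
        rw [inner_eq_integral_mul_of_ae_eq hUV hUV, hellingerSq]
        simp only [sqrtDensity, sq]
    _ = 1 - ⟪U, V⟫_ℝ := by
        rw [real_inner_self_eq_norm_sq, norm_sub_sq_real, hU1, hV1]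
        ring

theorem hellinger_lower_bound_general
    (P Q : Measure ℝ) [IsProbabilityMeasure P] [IsProbabilityMeasure Q]
    (mP mQ σP σQ : ℝ) (hσP : 0 ≤ σP) (hσQ : 0 ≤ σQ)
    (hP2 : Integrable (fun x => x ^ 2) P)
    (hQ2 : Integrable (fun x => x ^ 2) Q)
    (hmP : ∫ x, x ∂P = mP) (hmQ : ∫ x, x ∂Q = mQ)
    (hvP : ∫ x, (x - mP) ^ 2 ∂P = σP ^ 2) (hvQ : ∫ x, (x - mQ) ^ 2 ∂Q = σQ ^ 2) :
    hellingerSq P Q ≥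
      1 - Real.sqrt (1 - (mP - mQ) ^ 2 / ((mP - mQ) ^ 2 + (σP + σQ) ^ 2)) := by
  obtain ⟨U, F, hU, hF, hU1, hFσ, hFU⟩ := exists_L2_sqrtDensity_centered (P + Q) P
    (Measure.absolutelyContinuous_of_le (Measure.le_add_right le_rfl)) hσP hP2 hmP hvP
  obtain ⟨V, G, hV, hG, hV1, hGσ, hGV⟩ := exists_L2_sqrtDensity_centered (P + Q) Q
    (Measure.absolutelyContinuous_of_le (Measure.le_add_left le_rfl)) hσQ hQ2 hmQ hvQ
  have hρ0 : 0 ≤ ⟪U, V⟫_ℝ := by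
    rw [inner_eq_integral_mul_of_ae_eq hU hV]
    exact integral_nonneg fun x => mul_nonneg (Real.sqrt_nonneg _) (Real.sqrt_nonneg _)
  have hρ1 : ⟪U, V⟫_ℝ ≤ 1 := by simpa [hU1, hV1] using real_inner_le_norm U V
  have hbound : |mP - mQ| * ⟪U, V⟫_ℝ ≤ (σP + σQ) * √(1 - ⟪U, V⟫_ℝ ^ 2) := by
    calc |mP - mQ| * ⟪U, V⟫_ℝ = |⟪G, U⟫_ℝ - ⟪F, V⟫_ℝ| := by
          rw [inner_sub_inner_eq_sub_mul_inner hU hV hF hG, abs_mul, abs_of_nonneg hρ0]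
      _ ≤ (‖F‖ + ‖G‖) * √(1 - ⟪U, V⟫_ℝ ^ 2) := abs_inner_sub_inner_le hU1 hV1 hFU hGV
      _ = (σP + σQ) * √(1 - ⟪U, V⟫_ℝ ^ 2) := by rw [hFσ, hGσ]
  rw [hellingerSq_eq_one_sub_inner P Q hU hV hU1 hV1, ge_iff_le, sub_le_sub_iff_left]
  exact le_sqrt_one_sub_div_of_abs_mul_le hρ0 hρ1 hbound

theorem hellinger_lower_bound
    (P Q : Measure ℝ) [IsProbabilityMeasure P] [IsProbabilityMeasure Q]
    (mP mQ σP σQ : ℝ) (hσP : 0 ≤ σP) (hσQ : 0 ≤ σQ)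
    (hP1 : Integrable (fun x => x) P) (hP2 : Integrable (fun x => x ^ 2) P)
    (hQ1 : Integrable (fun x => x) Q) (hQ2 : Integrable (fun x => x ^ 2) Q)
    (hmP : ∫ x, x ∂P = mP) (hmQ : ∫ x, x ∂Q = mQ)
    (hvP : ∫ x, (x - mP) ^ 2 ∂P = σP ^ 2) (hvQ : ∫ x, (x - mQ) ^ 2 ∂Q = σQ ^ 2)
    (hne : mP ≠ mQ) :
    hellingerSq P Q ≥
      1 - Real.sqrt (1 - (mP - mQ) ^ 2 / ((mP - mQ) ^ 2 + (σP + σQ) ^ 2)) :=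
  hellinger_lower_bound_general P Q mP mQ σP σQ hσP hσQ hP2 hQ2 hmP hmQ hvP hvQ
end

section
/- Let m_P, m_Q ∈ ℝ with m_P ≠ m_Q and σ_P, σ_Q ≥ 0. Set a := m_P − m_Q, b := σ_Q² − σ_P², v := (1/(2|a|))√(b² + 2a²(σ_P² + σ_Q²) + a⁴), r := 1/2 + (b + a²)/(4av), s := 1/2 + (b − a²)/(4av), u₁ := m_P + √((1−r)σ_P²/r), u₂ := m_P − √(r σ_P²/(1−r)) (when 0 < r < 1). Define probability measures P, Q on the two-point set {u₁, u₂} by P(u₁) = r, P(u₂) = 1−r, Q(u₁) = s, Q(u₂) = 1−s. Then P has mean m_P and variance σ_P², Q has mean m_Q and variance σ_Q², and H²(P,Q) = 1 − √(1 − a²/(a² + (σ_P + σ_Q)²)); in particular the lower bound 1 − √(1 − a²/(a² + (σ_P + σ_Q)²)) on the squared Hellinger distance over all pairs with these means and variances is attained. -/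
/-!
Both laws live on `{u₁, u₂}`, and a two-point law with weights `r, 1 - r` has mean
`r u₁ + (1 - r) u₂` and variance `r (1 - r) (u₁ - u₂)²`. The choice of `v` makes
`4 v² r (1 - r) = σ_P²`, `4 v² s (1 - s) = σ_Q²` and `2 v (r - s) = a`; hence
`u₁ = m_P + 2 v (1 - r)` and `u₂ = m_P - 2 v r`, so `u₁ - u₂ = 2 v` and all four moment identities
follow. Two two-point laws on the same support have `H² = 1 - √(rs) - √((1 - r)(1 - s))`, and the
square of `√(rs) + √((1 - r)(1 - s))` is `(σ_P + σ_Q)² / (a² + (σ_P + σ_Q)²)` because the radicand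
defining `v` factors as `(a² + (σ_P + σ_Q)²) (a² + (σ_P - σ_Q)²)`.
-/

open MeasureTheory Real

/-- The probability measure on the two-point set `{u₁, u₂}` assigning mass `r` to `u₁`
and `1 - r` to `u₂`. -/
noncomputable def twoPoint (u₁ u₂ r : ℝ) : Measure ℝ :=
  ENNReal.ofReal r • Measure.dirac u₁ + ENNReal.ofReal (1 - r) • Measure.dirac u₂

open scoped ENNReal

section Dirac

variable {α : Type*} [MeasurableSpace α] [MeasurableSingletonClass α]

lemma integral_smul_dirac_add_smul_dirac (f : α → ℝ) (x y : α) {c d : ℝ} (hc : 0 ≤ c)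
    (hd : 0 ≤ d) :
    ∫ z, f z ∂(ENNReal.ofReal c • Measure.dirac x + ENNReal.ofReal d • Measure.dirac y) =
      c * f x + d * f y := by
  rw [integral_add_measure ((integrable_dirac (by simp)).smul_measure ENNReal.ofReal_ne_top)
      ((integrable_dirac (by simp)).smul_measure ENNReal.ofReal_ne_top),
    integral_smul_measure, integral_smul_measure, integral_dirac, integral_dirac,
    ENNReal.toReal_ofReal hc, ENNReal.toReal_ofReal hd, smul_eq_mul, smul_eq_mul]

lemma withDensity_dirac (f : α → ℝ≥0∞) (x : α) :
    (Measure.dirac x).withDensity f = f x • Measure.dirac x :=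
  (withDensity_congr_ae (ae_eq_dirac f)).trans (withDensity_const _)

end Dirac

lemma hellingerSq_eq_integral_of_rnDeriv {P Q : Measure ℝ} {f g : ℝ → ℝ} (hf : ∀ x, 0 ≤ f x)
    (hg : ∀ x, 0 ≤ g x) (hP : P.rnDeriv (P + Q) =ᵐ[P + Q] fun x ↦ ENNReal.ofReal (f x))
    (hQ : Q.rnDeriv (P + Q) =ᵐ[P + Q] fun x ↦ ENNReal.ofReal (g x)) :
    hellingerSq P Q = 1 / 2 * ∫ x, (√(f x) - √(g x)) ^ 2 ∂(P + Q) := by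
  rw [hellingerSq, integral_congr_ae]
  filter_upwards [hP, hQ] with x hPx hQx
  rw [hPx, hQx, ENNReal.toReal_ofReal (hf x), ENNReal.toReal_ofReal (hg x)]

lemma mul_div_add_self_of_nonneg {p q : ℝ} (hp : 0 ≤ p) (hq : 0 ≤ q) :
    (p + q) * (p / (p + q)) = p := by
  rcases (add_nonneg hp hq).eq_or_lt with h | h
  · rw [← h, zero_mul]
    linarith
  · field_simp

lemma mul_sqrt_div_sub_sqrt_div_sq {p q : ℝ} (hp : 0 ≤ p) (hq : 0 ≤ q) :
    (p + q) * (√(p / (p + q)) - √(q / (q + p))) ^ 2 = p + q - 2 * √(p * q) := by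
  rw [add_comm q p]
  rcases (add_nonneg hp hq).eq_or_lt with h | h
  · obtain ⟨rfl, rfl⟩ : p = 0 ∧ q = 0 := ⟨by linarith, by linarith⟩
    simp
  · have hpq : √(p / (p + q)) * √(q / (p + q)) = √(p * q) / (p + q) := by
      rw [← Real.sqrt_mul (by positivity), div_mul_div_comm, Real.sqrt_div' _ (by positivity),
        Real.sqrt_mul_self h.le]
    rw [sub_sq, Real.sq_sqrt (by positivity), Real.sq_sqrt (by positivity), mul_assoc 2, hpq]
    field_simp
    ring

lemma sq_sqrt_mul_add_sqrt_mul {r s : ℝ} (hr0 : 0 ≤ r) (hr1 : r ≤ 1) (hs0 : 0 ≤ s)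
    (hs1 : s ≤ 1) :
    (√(r * s) + √((1 - r) * (1 - s))) ^ 2 =
      r * s + (1 - r) * (1 - s) + 2 * (√(r * (1 - r)) * √(s * (1 - s))) := by
  have hr1' : 0 ≤ 1 - r := sub_nonneg.2 hr1
  have hs1' : 0 ≤ 1 - s := sub_nonneg.2 hs1
  have hprod : √(r * s) * √((1 - r) * (1 - s)) = √(r * (1 - r)) * √(s * (1 - s)) := by
    rw [← Real.sqrt_mul (by positivity), ← Real.sqrt_mul (by positivity)]
    ring_nf
  rw [add_sq, Real.sq_sqrt (by positivity), Real.sq_sqrt (by positivity), mul_assoc 2, hprod]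
  ring

section TwoPoint

variable {u₁ u₂ r s : ℝ}

lemma integral_twoPoint (f : ℝ → ℝ) (hr0 : 0 ≤ r) (hr1 : r ≤ 1) :
    ∫ x, f x ∂twoPoint u₁ u₂ r = r * f u₁ + (1 - r) * f u₂ :=
  integral_smul_dirac_add_smul_dirac f u₁ u₂ hr0 (sub_nonneg.2 hr1)

lemma integral_sq_twoPoint_sub_sq (hr0 : 0 ≤ r) (hr1 : r ≤ 1) :
    (∫ x, x ^ 2 ∂twoPoint u₁ u₂ r) - (∫ x, x ∂twoPoint u₁ u₂ r) ^ 2 =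
      r * (1 - r) * (u₁ - u₂) ^ 2 := by
  rw [integral_twoPoint _ hr0 hr1, integral_twoPoint _ hr0 hr1]
  ring

instance isFiniteMeasure_twoPoint (u₁ u₂ r : ℝ) : IsFiniteMeasure (twoPoint u₁ u₂ r) :=
  ⟨by simp [twoPoint, lt_top_iff_ne_top]⟩

lemma twoPoint_add_twoPoint (hr0 : 0 ≤ r) (hr1 : r ≤ 1) (hs0 : 0 ≤ s) (hs1 : s ≤ 1) :
    twoPoint u₁ u₂ r + twoPoint u₁ u₂ s =
      ENNReal.ofReal (r + s) • Measure.dirac u₁ +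
        ENNReal.ofReal ((1 - r) + (1 - s)) • Measure.dirac u₂ := by
  rw [twoPoint, twoPoint, ENNReal.ofReal_add hr0 hs0,
    ENNReal.ofReal_add (sub_nonneg.2 hr1) (sub_nonneg.2 hs1), add_smul, add_smul]
  abel

noncomputable def twoPointDensity (u₁ r s x : ℝ) : ℝ :=
  if x = u₁ then r / (r + s) else (1 - r) / ((1 - r) + (1 - s))

lemma twoPoint_eq_withDensity (hu : u₁ ≠ u₂) (hr0 : 0 ≤ r) (hr1 : r ≤ 1) (hs0 : 0 ≤ s)
    (hs1 : s ≤ 1) :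
    twoPoint u₁ u₂ r = (twoPoint u₁ u₂ r + twoPoint u₁ u₂ s).withDensity
      fun x ↦ ENNReal.ofReal (twoPointDensity u₁ r s x) := by
  rw [twoPoint_add_twoPoint hr0 hr1 hs0 hs1, withDensity_add_measure, withDensity_smul_measure,
    withDensity_smul_measure, withDensity_dirac, withDensity_dirac, twoPointDensity,
    twoPointDensity, if_pos rfl, if_neg hu.symm, smul_smul, smul_smul,
    ← ENNReal.ofReal_mul (by linarith), ← ENNReal.ofReal_mul (by linarith),
    mul_div_add_self_of_nonneg hr0 hs0,
    mul_div_add_self_of_nonneg (sub_nonneg.2 hr1) (sub_nonneg.2 hs1), twoPoint]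

lemma twoPointDensity_nonneg (hr0 : 0 ≤ r) (hr1 : r ≤ 1) (hs0 : 0 ≤ s) (hs1 : s ≤ 1)
    (x : ℝ) : 0 ≤ twoPointDensity u₁ r s x := by
  unfold twoPointDensity
  split_ifs
  · positivity
  · exact div_nonneg (by linarith) (by linarith)

lemma rnDeriv_twoPoint (hu : u₁ ≠ u₂) (hr0 : 0 ≤ r) (hr1 : r ≤ 1) (hs0 : 0 ≤ s)
    (hs1 : s ≤ 1) :
    (twoPoint u₁ u₂ r).rnDeriv (twoPoint u₁ u₂ r + twoPoint u₁ u₂ s)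
      =ᵐ[twoPoint u₁ u₂ r + twoPoint u₁ u₂ s]
      fun x ↦ ENNReal.ofReal (twoPointDensity u₁ r s x) := by
  have hmeas : Measurable fun x ↦ ENNReal.ofReal (twoPointDensity u₁ r s x) :=
    (Measurable.ite (measurableSet_singleton u₁) measurable_const measurable_const).ennreal_ofReal
  have h := Measure.rnDeriv_withDensity (twoPoint u₁ u₂ r + twoPoint u₁ u₂ s) hmeas
  rwa [← twoPoint_eq_withDensity hu hr0 hr1 hs0 hs1] at h

lemma hellingerSq_twoPoint (hu : u₁ ≠ u₂) (hr0 : 0 ≤ r) (hr1 : r ≤ 1) (hs0 : 0 ≤ s)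
    (hs1 : s ≤ 1) :
    hellingerSq (twoPoint u₁ u₂ r) (twoPoint u₁ u₂ s) = 1 - √(r * s) - √((1 - r) * (1 - s)) := by
  have hQ := rnDeriv_twoPoint (u₂ := u₂) hu hs0 hs1 hr0 hr1
  rw [add_comm (twoPoint u₁ u₂ s)] at hQ
  rw [hellingerSq_eq_integral_of_rnDeriv (twoPointDensity_nonneg hr0 hr1 hs0 hs1)
      (twoPointDensity_nonneg hs0 hs1 hr0 hr1) (rnDeriv_twoPoint hu hr0 hr1 hs0 hs1) hQ,
    twoPoint_add_twoPoint hr0 hr1 hs0 hs1,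
    integral_smul_dirac_add_smul_dirac _ _ _ (by linarith) (by linarith)]
  simp only [twoPointDensity, if_neg hu.symm, ↓reduceIte]
  rw [mul_sqrt_div_sub_sqrt_div_sq hr0 hs0,
    mul_sqrt_div_sub_sqrt_div_sq (sub_nonneg.2 hr1) (sub_nonneg.2 hs1)]
  ring

end TwoPoint

section Parameters

variable {a b v σ σP σQ r s : ℝ}

lemma four_mul_sq_mul_sq_of_eq_div_abs {D : ℝ} (ha : a ≠ 0) (hD : 0 ≤ D)
    (hv : v = 1 / (2 * |a|) * √D) : 4 * a ^ 2 * v ^ 2 = D := by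
  rw [hv, mul_pow, div_pow, Real.sq_sqrt hD, mul_pow, sq_abs]
  field_simp
  ring

lemma four_sq_mul_r_mul_one_sub_r (ha : a ≠ 0) (hv0 : v ≠ 0)
    (hv : 4 * a ^ 2 * v ^ 2 = b ^ 2 + 2 * a ^ 2 * (σP ^ 2 + σQ ^ 2) + a ^ 4)
    (hb : b = σQ ^ 2 - σP ^ 2) (hr : r = 1 / 2 + (b + a ^ 2) / (4 * a * v)) :
    4 * v ^ 2 * (r * (1 - r)) = σP ^ 2 := by
  subst hr hb
  field_simp
  linear_combination 4 * hv

lemma four_sq_mul_s_mul_one_sub_s (ha : a ≠ 0) (hv0 : v ≠ 0)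
    (hv : 4 * a ^ 2 * v ^ 2 = b ^ 2 + 2 * a ^ 2 * (σP ^ 2 + σQ ^ 2) + a ^ 4)
    (hb : b = σQ ^ 2 - σP ^ 2) (hs : s = 1 / 2 + (b - a ^ 2) / (4 * a * v)) :
    4 * v ^ 2 * (s * (1 - s)) = σQ ^ 2 := by
  subst hs hb
  field_simp
  linear_combination 4 * hv

lemma two_mul_mul_r_sub_s (ha : a ≠ 0) (hv0 : v ≠ 0) (hr : r = 1 / 2 + (b + a ^ 2) / (4 * a * v))
    (hs : s = 1 / 2 + (b - a ^ 2) / (4 * a * v)) : 2 * v * (r - s) = a := by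
  subst hr hs
  field_simp
  ring

lemma four_sq_mul_r_mul_s_add (ha : a ≠ 0) (hv0 : v ≠ 0)
    (hv : 4 * a ^ 2 * v ^ 2 = b ^ 2 + 2 * a ^ 2 * (σP ^ 2 + σQ ^ 2) + a ^ 4)
    (hr : r = 1 / 2 + (b + a ^ 2) / (4 * a * v))
    (hs : s = 1 / 2 + (b - a ^ 2) / (4 * a * v)) :
    4 * a ^ 2 * v ^ 2 * (r * s + (1 - r) * (1 - s)) = b ^ 2 + a ^ 2 * (σP ^ 2 + σQ ^ 2) := by
  subst hr hs
  field_simp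
  linear_combination 8 * hv

lemma nonneg_and_le_one_of_mul_one_sub (hv : 0 < v) (h : 4 * v ^ 2 * (s * (1 - s)) = σ ^ 2) :
    0 ≤ s ∧ s ≤ 1 := by
  have : 0 ≤ s * (1 - s) := nonneg_of_mul_nonneg_right (h ▸ sq_nonneg σ) (by positivity)
  constructor <;> nlinarith

lemma sqrt_one_sub_mul_sq_div (hv : 0 ≤ v) (hr0 : 0 < r) (hr1 : r < 1)
    (h : 4 * v ^ 2 * (r * (1 - r)) = σ ^ 2) : √((1 - r) * σ ^ 2 / r) = 2 * v * (1 - r) := by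
  rw [← h, show (1 - r) * (4 * v ^ 2 * (r * (1 - r))) / r = (2 * v * (1 - r)) ^ 2 by
    field_simp; ring]
  exact Real.sqrt_sq (mul_nonneg (by positivity) (by linarith))

lemma sqrt_mul_sq_div_one_sub (hv : 0 ≤ v) (hr0 : 0 < r) (hr1 : r < 1)
    (h : 4 * v ^ 2 * (r * (1 - r)) = σ ^ 2) : √(r * σ ^ 2 / (1 - r)) = 2 * v * r := by
  have := sqrt_one_sub_mul_sq_div (σ := σ) hv (sub_pos.2 hr1) (sub_lt_self 1 hr0)
    (by rw [sub_sub_cancel, mul_comm (1 - r), h])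
  rwa [sub_sub_cancel] at this

lemma sqrt_mul_one_sub_eq_div (hv : 0 < v) (hσ : 0 ≤ σ) (h : 4 * v ^ 2 * (r * (1 - r)) = σ ^ 2) :
    √(r * (1 - r)) = σ / (2 * v) := by
  rw [show r * (1 - r) = (σ / (2 * v)) ^ 2 by field_simp; linarith, Real.sqrt_sq (by positivity)]

lemma sqrt_mul_add_sqrt_mul_eq (ha : a ≠ 0) (hv0 : 0 < v) (hσP : 0 ≤ σP) (hσQ : 0 ≤ σQ)
    (hv : 4 * a ^ 2 * v ^ 2 = b ^ 2 + 2 * a ^ 2 * (σP ^ 2 + σQ ^ 2) + a ^ 4)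
    (hb : b = σQ ^ 2 - σP ^ 2) (hr : r = 1 / 2 + (b + a ^ 2) / (4 * a * v))
    (hs : s = 1 / 2 + (b - a ^ 2) / (4 * a * v)) :
    √(r * s) + √((1 - r) * (1 - s)) = √(1 - a ^ 2 / (a ^ 2 + (σP + σQ) ^ 2)) := by
  have hrP := four_sq_mul_r_mul_one_sub_r ha hv0.ne' hv hb hr
  have hsQ := four_sq_mul_s_mul_one_sub_s ha hv0.ne' hv hb hs
  obtain ⟨hr0, hr1⟩ := nonneg_and_le_one_of_mul_one_sub hv0 hrP
  obtain ⟨hs0, hs1⟩ := nonneg_and_le_one_of_mul_one_sub hv0 hsQ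
  have hsq : (√(r * s) + √((1 - r) * (1 - s))) ^ 2 = 1 - a ^ 2 / (a ^ 2 + (σP + σQ) ^ 2) := by
    rw [sq_sqrt_mul_add_sqrt_mul hr0 hr1 hs0 hs1, sqrt_mul_one_sub_eq_div hv0 hσP hrP,
      sqrt_mul_one_sub_eq_div hv0 hσQ hsQ]
    have hrs : r * s + (1 - r) * (1 - s) =
        (b ^ 2 + a ^ 2 * (σP ^ 2 + σQ ^ 2)) / (4 * a ^ 2 * v ^ 2) := by
      rw [← four_sq_mul_r_mul_s_add ha hv0.ne' hv hr hs]
      field_simp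
    have hK : 1 - a ^ 2 / (a ^ 2 + (σP + σQ) ^ 2) =
        (σP + σQ) ^ 2 / (a ^ 2 + (σP + σQ) ^ 2) := by
      field_simp
      ring
    rw [hrs, hK]
    field_simp
    subst hb
    linear_combination -2 * (σP + σQ) ^ 2 * hv
  rw [← hsq, Real.sqrt_sq (by positivity)]

end Parameters

theorem hellinger_lower_bound_attained
    (mP mQ σP σQ : ℝ) (hne : mP ≠ mQ) (hσP : 0 ≤ σP) (hσQ : 0 ≤ σQ)
    (a b v r s u₁ u₂ : ℝ)
    (ha : a = mP - mQ) (hb : b = σQ ^ 2 - σP ^ 2)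
    (hv : v = (1 / (2 * |a|)) *
      Real.sqrt (b ^ 2 + 2 * a ^ 2 * (σP ^ 2 + σQ ^ 2) + a ^ 4))
    (hr : r = 1 / 2 + (b + a ^ 2) / (4 * a * v))
    (hs : s = 1 / 2 + (b - a ^ 2) / (4 * a * v))
    (hr0 : 0 < r) (hr1 : r < 1)
    (hu₁ : u₁ = mP + Real.sqrt ((1 - r) * σP ^ 2 / r))
    (hu₂ : u₂ = mP - Real.sqrt (r * σP ^ 2 / (1 - r))) :
    (∫ x, x ∂(twoPoint u₁ u₂ r) = mP) ∧
    (∫ x, x ^ 2 ∂(twoPoint u₁ u₂ r)) - mP ^ 2 = σP ^ 2 ∧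
    (∫ x, x ∂(twoPoint u₁ u₂ s) = mQ) ∧
    (∫ x, x ^ 2 ∂(twoPoint u₁ u₂ s)) - mQ ^ 2 = σQ ^ 2 ∧
    hellingerSq (twoPoint u₁ u₂ r) (twoPoint u₁ u₂ s) =
      1 - Real.sqrt (1 - a ^ 2 / (a ^ 2 + (σP + σQ) ^ 2)) := by
  have ha0 : a ≠ 0 := ha ▸ sub_ne_zero.2 hne
  have hD : 0 < b ^ 2 + 2 * a ^ 2 * (σP ^ 2 + σQ ^ 2) + a ^ 4 := by positivity
  have hv0 : 0 < v := by rw [hv]; positivity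
  replace hv := four_mul_sq_mul_sq_of_eq_div_abs ha0 hD.le hv
  have hrP := four_sq_mul_r_mul_one_sub_r ha0 hv0.ne' hv hb hr
  have hsQ := four_sq_mul_s_mul_one_sub_s ha0 hv0.ne' hv hb hs
  have hrs := two_mul_mul_r_sub_s ha0 hv0.ne' hr hs
  obtain ⟨hs0, hs1⟩ := nonneg_and_le_one_of_mul_one_sub hv0 hsQ
  rw [sqrt_one_sub_mul_sq_div hv0.le hr0 hr1 hrP] at hu₁
  rw [sqrt_mul_sq_div_one_sub hv0.le hr0 hr1 hrP] at hu₂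
  have hmeanP : ∫ x, x ∂twoPoint u₁ u₂ r = mP := by
    rw [integral_twoPoint _ hr0.le hr1.le, hu₁, hu₂]
    ring
  have hmeanQ : ∫ x, x ∂twoPoint u₁ u₂ s = mQ := by
    rw [integral_twoPoint _ hs0 hs1, hu₁, hu₂]
    linear_combination -ha - hrs
  have hu : u₁ ≠ u₂ := ne_of_gt (by rw [hu₁, hu₂]; linarith)
  refine ⟨hmeanP, ?_, hmeanQ, ?_, ?_⟩
  · rw [← hmeanP, integral_sq_twoPoint_sub_sq hr0.le hr1.le, hu₁, hu₂]
    linear_combination hrP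
  · rw [← hmeanQ, integral_sq_twoPoint_sub_sq hs0 hs1, hu₁, hu₂]
    linear_combination hsQ
  · rw [hellingerSq_twoPoint hu hr0.le hr1.le hs0 hs1, sub_sub,
      sqrt_mul_add_sqrt_mul_eq ha0 hv0 hσP hσQ hv hb hr hs]
end

section
/- Let m_P, m_Q ∈ ℝ with m_P ≠ m_Q and σ_P, σ_Q ≥ 0, and let P, Q be probability measures supported on a common two-point set {u₁, u₂} ⊂ ℝ such that P has mean m_P and variance σ_P² and Q has mean m_Q and variance σ_Q². Set a := m_P − m_Q and write r := P(u₁), s := Q(u₁). Then H²(P,Q) = h²(r,s) = 1 − √(1 − a²/(a² + (σ_P + σ_Q)²)). -/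
open MeasureTheory Real

/-- The binary squared Hellinger distance
`h²(r,s) = (1/2)((√r − √s)² + (√(1−r) − √(1−s))²)`. -/
noncomputable def binaryH (r s : ℝ) : ℝ :=
  (1 / 2) * ((Real.sqrt r - Real.sqrt s) ^ 2 +
    (Real.sqrt (1 - r) - Real.sqrt (1 - s)) ^ 2)

lemma dirac_withDensity (u : ℝ) (f : ℝ → ENNReal) :
    (Measure.dirac u).withDensity f = f u • Measure.dirac u := by
  classical
  ext s hs
  rw [withDensity_apply _ hs, setLIntegral_dirac f s, Measure.smul_apply,
    Measure.dirac_apply]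
  by_cases h : u ∈ s <;> simp [h]

lemma twoSmul_withDensity (u₁ u₂ : ℝ) (c₁ c₂ : ENNReal) (f : ℝ → ENNReal) :
    (c₁ • Measure.dirac u₁ + c₂ • Measure.dirac u₂).withDensity f
      = (c₁ * f u₁) • Measure.dirac u₁ + (c₂ * f u₂) • Measure.dirac u₂ := by
  rw [withDensity_add_measure, withDensity_smul_measure, withDensity_smul_measure,
    dirac_withDensity, dirac_withDensity, smul_smul, smul_smul]

lemma integral_twoSmulDirac (u₁ u₂ : ℝ) (c₁ c₂ : ENNReal) (hc₁ : c₁ ≠ ⊤) (hc₂ : c₂ ≠ ⊤)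
    (g : ℝ → ℝ) :
    ∫ x, g x ∂(c₁ • Measure.dirac u₁ + c₂ • Measure.dirac u₂)
      = c₁.toReal * g u₁ + c₂.toReal * g u₂ := by
  have h₁ : Integrable g (Measure.dirac u₁) :=
    (integrable_const (g u₁)).congr (MeasureTheory.ae_eq_dirac g).symm
  have h₂ : Integrable g (Measure.dirac u₂) :=
    (integrable_const (g u₂)).congr (MeasureTheory.ae_eq_dirac g).symm
  rw [integral_add_measure (h₁.smul_measure hc₁) (h₂.smul_measure hc₂),
    integral_smul_measure, integral_smul_measure, integral_dirac, integral_dirac,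
    smul_eq_mul, smul_eq_mul]

theorem hellinger_binary_value
    (mP mQ σP σQ : ℝ) (hne : mP ≠ mQ) (hσP : 0 ≤ σP) (hσQ : 0 ≤ σQ)
    (a : ℝ) (ha : a = mP - mQ)
    (u₁ u₂ r s : ℝ) (hu : u₁ ≠ u₂)
    (hr0 : 0 ≤ r) (hr1 : r ≤ 1) (hs0 : 0 ≤ s) (hs1 : s ≤ 1)
    (hmeanP : r * u₁ + (1 - r) * u₂ = mP)
    (hvarP : r * u₁ ^ 2 + (1 - r) * u₂ ^ 2 - mP ^ 2 = σP ^ 2)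
    (hmeanQ : s * u₁ + (1 - s) * u₂ = mQ)
    (hvarQ : s * u₁ ^ 2 + (1 - s) * u₂ ^ 2 - mQ ^ 2 = σQ ^ 2) :
    hellingerSq (twoPoint u₁ u₂ r) (twoPoint u₁ u₂ s) = binaryH r s ∧
    binaryH r s = 1 - Real.sqrt (1 - a ^ 2 / (a ^ 2 + (σP + σQ) ^ 2)) := by
  have hrs : r ≠ s := by
    intro h
    exact hne (by rw [← hmeanP, ← hmeanQ, h])
  have h1pos : 0 < r + s :=
    (add_nonneg hr0 hs0).lt_of_ne (fun h => hrs (by linarith))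
  have h2pos : 0 < (1 - r) + (1 - s) :=
    (add_nonneg (by linarith) (by linarith)).lt_of_ne (fun h => hrs (by linarith))
  constructor
  · -- Hellinger equals binaryH
    set μ := twoPoint u₁ u₂ r + twoPoint u₁ u₂ s with hμdef
    have hμ : μ = ENNReal.ofReal (r + s) • Measure.dirac u₁
        + ENNReal.ofReal ((1 - r) + (1 - s)) • Measure.dirac u₂ := by
      simp only [hμdef, twoPoint]
      rw [ENNReal.ofReal_add hr0 hs0, ENNReal.ofReal_add (by linarith) (by linarith),
        add_smul, add_smul]
      abel
    set fP : ℝ → ENNReal := fun x => if x = u₁ then ENNReal.ofReal (r / (r + s))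
      else ENNReal.ofReal ((1 - r) / ((1 - r) + (1 - s))) with hfPdef
    set fQ : ℝ → ENNReal := fun x => if x = u₁ then ENNReal.ofReal (s / (r + s))
      else ENNReal.ofReal ((1 - s) / ((1 - r) + (1 - s))) with hfQdef
    have hfPm : Measurable fP := Measurable.ite (measurableSet_eq) measurable_const
      measurable_const
    have hfQm : Measurable fQ := Measurable.ite (measurableSet_eq) measurable_const
      measurable_const
    have hfP1 : fP u₁ = ENNReal.ofReal (r / (r + s)) := if_pos rfl
    have hfP2 : fP u₂ = ENNReal.ofReal ((1 - r) / ((1 - r) + (1 - s))) := if_neg hu.symm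
    have hfQ1 : fQ u₁ = ENNReal.ofReal (s / (r + s)) := if_pos rfl
    have hfQ2 : fQ u₂ = ENNReal.ofReal ((1 - s) / ((1 - r) + (1 - s))) := if_neg hu.symm
    have hwP : μ.withDensity fP = twoPoint u₁ u₂ r := by
      rw [hμ, twoSmul_withDensity, hfP1, hfP2, twoPoint]
      rw [← ENNReal.ofReal_mul (by linarith), ← ENNReal.ofReal_mul (by linarith)]
      rw [show (r + s) * (r / (r + s)) = r by field_simp,
        show (1 - r + (1 - s)) * ((1 - r) / (1 - r + (1 - s))) = 1 - r by field_simp]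
    have hwQ : μ.withDensity fQ = twoPoint u₁ u₂ s := by
      rw [hμ, twoSmul_withDensity, hfQ1, hfQ2, twoPoint]
      rw [← ENNReal.ofReal_mul (by linarith), ← ENNReal.ofReal_mul (by linarith)]
      rw [show (r + s) * (s / (r + s)) = s by field_simp,
        show (1 - r + (1 - s)) * ((1 - s) / (1 - r + (1 - s))) = 1 - s by field_simp]
    have hfin : IsFiniteMeasure μ := by
      constructor
      rw [hμ]
      simp only [Measure.coe_add, Measure.coe_smul, Pi.add_apply, Pi.smul_apply,
        measure_univ, smul_eq_mul, mul_one]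
      exact ENNReal.add_lt_top.2 ⟨ENNReal.ofReal_lt_top, ENNReal.ofReal_lt_top⟩
    have hPrn : fP =ᵐ[μ] (twoPoint u₁ u₂ r).rnDeriv μ := by
      rw [← hwP]
      exact (Measure.rnDeriv_withDensity μ hfPm).symm
    have hQrn : fQ =ᵐ[μ] (twoPoint u₁ u₂ s).rnDeriv μ := by
      rw [← hwQ]
      exact (Measure.rnDeriv_withDensity μ hfQm).symm
    have hint : ∫ x, (Real.sqrt (((twoPoint u₁ u₂ r).rnDeriv μ) x).toReal
        - Real.sqrt (((twoPoint u₁ u₂ s).rnDeriv μ) x).toReal) ^ 2 ∂μ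
        = ∫ x, (Real.sqrt ((fP x).toReal) - Real.sqrt ((fQ x).toReal)) ^ 2 ∂μ := by
      refine integral_congr_ae ?_
      filter_upwards [hPrn, hQrn] with x h1 h2
      rw [← h1, ← h2]
    have hval : ∫ x, (Real.sqrt ((fP x).toReal) - Real.sqrt ((fQ x).toReal)) ^ 2 ∂μ
        = (Real.sqrt r - Real.sqrt s) ^ 2
          + (Real.sqrt (1 - r) - Real.sqrt (1 - s)) ^ 2 := by
      rw [hμ, integral_twoSmulDirac _ _ _ _ ENNReal.ofReal_ne_top ENNReal.ofReal_ne_top]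
      rw [hfP1, hfP2, hfQ1, hfQ2]
      rw [ENNReal.toReal_ofReal h1pos.le, ENNReal.toReal_ofReal h2pos.le,
        ENNReal.toReal_ofReal (by positivity), ENNReal.toReal_ofReal (by positivity),
        ENNReal.toReal_ofReal (div_nonneg (by linarith) h2pos.le),
        ENNReal.toReal_ofReal (div_nonneg (by linarith) h2pos.le)]
      rw [Real.sqrt_div hr0, Real.sqrt_div hs0, Real.sqrt_div (by linarith : (0:ℝ) ≤ 1 - r),
        Real.sqrt_div (by linarith : (0:ℝ) ≤ 1 - s)]
      rw [div_sub_div_same, div_sub_div_same, div_pow, div_pow,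
        Real.sq_sqrt h1pos.le, Real.sq_sqrt h2pos.le]
      field_simp
    rw [hellingerSq, binaryH]
    rw [show twoPoint u₁ u₂ r + twoPoint u₁ u₂ s = μ from rfl]
    rw [hint, hval]
  · -- binaryH equals the closed form
    have hane : a ≠ 0 := by
      rw [ha]; exact sub_ne_zero.2 hne
    have hd : u₁ - u₂ ≠ 0 := sub_ne_zero.2 hu
    have e1 : Real.sqrt r ^ 2 = r := Real.sq_sqrt hr0
    have e2 : Real.sqrt s ^ 2 = s := Real.sq_sqrt hs0
    have e3 : Real.sqrt (1 - r) ^ 2 = 1 - r := Real.sq_sqrt (by linarith)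
    have e4 : Real.sqrt (1 - s) ^ 2 = 1 - s := Real.sq_sqrt (by linarith)
    obtain ⟨A, hAdef⟩ : ∃ A : ℝ, A = Real.sqrt r * Real.sqrt s
        + Real.sqrt (1 - r) * Real.sqrt (1 - s) := ⟨_, rfl⟩
    obtain ⟨B, hBdef⟩ : ∃ B : ℝ, B = Real.sqrt r * Real.sqrt (1 - r)
        + Real.sqrt s * Real.sqrt (1 - s) := ⟨_, rfl⟩
    have hA0 : 0 ≤ A := by rw [hAdef]; positivity
    have hB0 : 0 ≤ B := by rw [hBdef]; positivity
    have hG : (Real.sqrt r * Real.sqrt s * (Real.sqrt (1 - r) * Real.sqrt (1 - s))) ^ 2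
        = r * s * ((1 - r) * (1 - s)) := by
      rw [mul_pow, mul_pow, mul_pow, e1, e2, e3, e4]
    have hkey : A ^ 2 * ((r - s) ^ 2 + B ^ 2) = B ^ 2 := by
      have hA2 : A ^ 2 = r * s + (1 - r) * (1 - s)
          + 2 * (Real.sqrt r * Real.sqrt s * (Real.sqrt (1 - r) * Real.sqrt (1 - s))) := by
        rw [hAdef]
        linear_combination Real.sqrt s ^ 2 * e1 + r * e2 + Real.sqrt (1 - s) ^ 2 * e3
          + (1 - r) * e4
      have hB2 : B ^ 2 = r * (1 - r) + s * (1 - s)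
          + 2 * (Real.sqrt r * Real.sqrt s * (Real.sqrt (1 - r) * Real.sqrt (1 - s))) := by
        rw [hBdef]
        linear_combination Real.sqrt (1 - r) ^ 2 * e1 + Real.sqrt (1 - s) ^ 2 * e2
          + r * e3 + s * e4
      rw [hA2, hB2]
      linear_combination 4 * hG
    have hvP : σP ^ 2 = r * (1 - r) * (u₁ - u₂) ^ 2 := by
      rw [← hvarP, ← hmeanP]; ring
    have hvQ : σQ ^ 2 = s * (1 - s) * (u₁ - u₂) ^ 2 := by
      rw [← hvarQ, ← hmeanQ]; ring
    have hsP : σP = Real.sqrt r * Real.sqrt (1 - r) * |u₁ - u₂| := by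
      rw [← Real.sqrt_sq hσP, hvP, show r * (1 - r) * (u₁ - u₂) ^ 2
        = r * ((1 - r) * (u₁ - u₂) ^ 2) by ring,
        Real.sqrt_mul hr0, Real.sqrt_mul (by linarith), Real.sqrt_sq_eq_abs, mul_assoc]
    have hsQ : σQ = Real.sqrt s * Real.sqrt (1 - s) * |u₁ - u₂| := by
      rw [← Real.sqrt_sq hσQ, hvQ, show s * (1 - s) * (u₁ - u₂) ^ 2
        = s * ((1 - s) * (u₁ - u₂) ^ 2) by ring,
        Real.sqrt_mul hs0, Real.sqrt_mul (by linarith), Real.sqrt_sq_eq_abs, mul_assoc]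
    have hS : σP + σQ = B * |u₁ - u₂| := by rw [hsP, hsQ, hBdef]; ring
    have hS2 : (σP + σQ) ^ 2 = B ^ 2 * (u₁ - u₂) ^ 2 := by
      rw [hS, mul_pow, sq_abs]
    have ha2 : a ^ 2 = (r - s) ^ 2 * (u₁ - u₂) ^ 2 := by
      rw [ha, ← hmeanP, ← hmeanQ]; ring
    have hK : 0 < a ^ 2 + (σP + σQ) ^ 2 := by positivity
    have hSA : (σP + σQ) ^ 2 = A ^ 2 * (a ^ 2 + (σP + σQ) ^ 2) := by
      rw [hS2, ha2]
      linear_combination (-(u₁ - u₂) ^ 2) * hkey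
    have hfrac : 1 - a ^ 2 / (a ^ 2 + (σP + σQ) ^ 2) = A ^ 2 := by
      rw [eq_comm, eq_sub_iff_add_eq, ← eq_sub_iff_add_eq']
      rw [div_eq_iff hK.ne', sub_mul, one_mul, ← hSA]
      ring
    rw [hfrac, Real.sqrt_sq hA0, binaryH, hAdef]
    linear_combination (1/2) * e1 + (1/2) * e2 + (1/2) * e3 + (1/2) * e4
end

section
/- Let P and Q be Borel probability measures on the real line with means m_P, m_Q and variances σ_P², σ_Q² respectively, and suppose m_P ≠ m_Q. Set a := m_P − m_Q. Then H²(P,Q) ≥ a²/(2(a² + 2(σ_P² + σ_Q²))). -/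
open MeasureTheory Real

lemma shift_sq_int (ν : Measure ℝ) [IsProbabilityMeasure ν]
    (h1 : Integrable (fun x => x) ν) (h2 : Integrable (fun x => x ^ 2) ν) (c : ℝ) :
    Integrable (fun x => (x - c) ^ 2) ν := by
  have h : (fun x : ℝ => (x - c) ^ 2) = fun x => x ^ 2 + ((-2 * c) * x + c ^ 2) := by
    ext x; ring
  rw [h]
  exact h2.add ((h1.const_mul _).add (integrable_const _))

lemma shift_sq_eq (ν : Measure ℝ) [IsProbabilityMeasure ν]
    (h1 : Integrable (fun x => x) ν) (h2 : Integrable (fun x => x ^ 2) ν) (c : ℝ) :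
    ∫ x, (x - c) ^ 2 ∂ν = (∫ x, x ^ 2 ∂ν) - 2 * c * (∫ x, x ∂ν) + c ^ 2 := by
  have h : (fun x : ℝ => (x - c) ^ 2) = fun x => x ^ 2 + ((-2 * c) * x + c ^ 2) := by
    ext x; ring
  have i1 : Integrable (fun x : ℝ => -2 * c * x) ν := h1.const_mul _
  have i2 : Integrable (fun x : ℝ => -2 * c * x + c ^ 2) ν := i1.add (integrable_const _)
  rw [h, integral_add h2 i2, integral_add i1 (integrable_const _), integral_const_mul,
    integral_const]
  simp [measure_univ]
  ring

set_option maxHeartbeats 1000000 in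
lemma hellinger_aux (μ : Measure ℝ) [IsFiniteMeasure μ] (p q : ℝ → ℝ)
    (hpm : Measurable p) (hqm : Measurable q)
    (hp0 : ∀ x, 0 ≤ p x) (hq0 : ∀ x, 0 ≤ q x)
    (hpq1 : ∀ᵐ x ∂μ, p x + q x = 1)
    (a B c : ℝ) (ha : a ≠ 0) (hB : 0 < B)
    (hf1 : Integrable (fun x => x - c) μ)
    (hf2 : Integrable (fun x => (x - c) ^ 2) μ)
    (hIf2 : ∫ x, (x - c) ^ 2 ∂μ = B / 2)
    (hmean : ∫ x, (x - c) * ((Real.sqrt (p x) - Real.sqrt (q x))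
        * (Real.sqrt (p x) + Real.sqrt (q x))) ∂μ = a) :
    a ^ 2 / (2 * B) ≤ (1 / 2) * ∫ x, (Real.sqrt (p x) - Real.sqrt (q x)) ^ 2 ∂μ := by
  set g : ℝ → ℝ := fun x => Real.sqrt (p x) - Real.sqrt (q x) with hgdef
  set s : ℝ → ℝ := fun x => Real.sqrt (p x) + Real.sqrt (q x) with hsdef
  set H : ℝ := (1 / 2) * ∫ x, g x ^ 2 ∂μ with hHdef
  have hgm : Measurable g :=
    (Real.continuous_sqrt.measurable.comp hpm).sub (Real.continuous_sqrt.measurable.comp hqm)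
  have hsm : Measurable s :=
    (Real.continuous_sqrt.measurable.comp hpm).add (Real.continuous_sqrt.measurable.comp hqm)
  have hsg : ∀ x, g x * s x = p x - q x := by
    intro x
    have h1 : Real.sqrt (p x) ^ 2 = p x := Real.sq_sqrt (hp0 x)
    have h2 : Real.sqrt (q x) ^ 2 = q x := Real.sq_sqrt (hq0 x)
    rw [hgdef, hsdef]; simp only
    linear_combination h1 - h2
  have hbounds : ∀ᵐ x ∂μ, g x ^ 2 ≤ 2 ∧ s x ^ 2 ≤ 2 ∧ |p x - q x| ≤ 1 := by
    filter_upwards [hpq1] with x h1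
    have hsp : Real.sqrt (p x) ^ 2 = p x := Real.sq_sqrt (hp0 x)
    have hsq : Real.sqrt (q x) ^ 2 = q x := Real.sq_sqrt (hq0 x)
    refine ⟨?_, ?_, ?_⟩
    · rw [hgdef]; simp only
      nlinarith [sq_nonneg (Real.sqrt (p x) + Real.sqrt (q x))]
    · rw [hsdef]; simp only
      nlinarith [sq_nonneg (Real.sqrt (p x) - Real.sqrt (q x))]
    · rw [abs_le]; constructor <;> nlinarith [hp0 x, hq0 x]
  have hg2I : Integrable (fun x => g x ^ 2) μ := by
    refine Integrable.mono' (integrable_const (2 : ℝ))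
      ((hgm.pow_const 2).aestronglyMeasurable) ?_
    filter_upwards [hbounds] with x hx
    rw [Real.norm_eq_abs, abs_of_nonneg (sq_nonneg _)]
    exact hx.1
  have hmf : Measurable (fun x : ℝ => x - c) := measurable_id.sub_const c
  have hf2s2I : Integrable (fun x => (x - c) ^ 2 * s x ^ 2) μ := by
    refine Integrable.mono' (hf2.const_mul 2)
      (((hmf.pow_const 2).mul (hsm.pow_const 2)).aestronglyMeasurable) ?_
    filter_upwards [hbounds] with x hx
    rw [Real.norm_eq_abs, abs_of_nonneg (by positivity)]
    nlinarith [sq_nonneg (x - c), hx.2.1]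
  have hfgsI : Integrable (fun x => (x - c) * (g x * s x)) μ := by
    refine Integrable.mono' hf1.abs
      ((hmf.mul (hgm.mul hsm)).aestronglyMeasurable) ?_
    filter_upwards [hbounds] with x hx
    rw [Real.norm_eq_abs, hsg x, abs_mul]
    calc |x - c| * |p x - q x| ≤ |x - c| * 1 :=
          mul_le_mul_of_nonneg_left hx.2.2 (abs_nonneg _)
      _ = |x - c| := mul_one _
  have hIf2s2 : ∫ x, (x - c) ^ 2 * s x ^ 2 ∂μ ≤ B := by
    have h1 : ∫ x, (x - c) ^ 2 * s x ^ 2 ∂μ ≤ ∫ x, 2 * (x - c) ^ 2 ∂μ := by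
      refine integral_mono_ae hf2s2I (hf2.const_mul 2) ?_
      filter_upwards [hbounds] with x hx
      nlinarith [sq_nonneg (x - c), hx.2.1]
    rw [integral_const_mul, hIf2] at h1
    linarith
  have hIg2 : ∫ x, g x ^ 2 ∂μ = 2 * H := by rw [hHdef]; ring
  set t : ℝ := |a| / B with htdef
  have hta : 0 < |a| := abs_pos.mpr ha
  have ht : 0 < t := div_pos hta hB
  have h2t : (0:ℝ) < 2 * t := by linarith
  have hptw : ∀ x, |(x - c) * (g x * s x)| ≤
      (t / 2) * ((x - c) ^ 2 * s x ^ 2) + (1 / (2 * t)) * g x ^ 2 := by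
    intro x
    have hrw : (t / 2) * ((x - c) ^ 2 * s x ^ 2) + (1 / (2 * t)) * g x ^ 2
        = (t ^ 2 * ((x - c) ^ 2 * s x ^ 2) + g x ^ 2) / (2 * t) := by
      field_simp
    rw [hrw, le_div_iff₀ h2t]
    rcases abs_cases ((x - c) * (g x * s x)) with ⟨h1, _⟩ | ⟨h1, _⟩ <;> rw [h1] <;>
      nlinarith [sq_nonneg (t * ((x - c) * s x) - g x), sq_nonneg (t * ((x - c) * s x) + g x)]
  have habs : |a| ≤ (t / 2) * (∫ x, (x - c) ^ 2 * s x ^ 2 ∂μ)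
      + (1 / (2 * t)) * (∫ x, g x ^ 2 ∂μ) := by
    have i1 : Integrable (fun x => (t / 2) * ((x - c) ^ 2 * s x ^ 2)) μ := hf2s2I.const_mul _
    have i2 : Integrable (fun x => (1 / (2 * t)) * g x ^ 2) μ := hg2I.const_mul _
    calc |a| = |∫ x, (x - c) * (g x * s x) ∂μ| := by rw [hmean]
      _ ≤ ∫ x, |(x - c) * (g x * s x)| ∂μ := by
          simpa only [Real.norm_eq_abs] using
            norm_integral_le_integral_norm (μ := μ) (fun x => (x - c) * (g x * s x))
      _ ≤ ∫ x, ((t / 2) * ((x - c) ^ 2 * s x ^ 2) + (1 / (2 * t)) * g x ^ 2) ∂μ := by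
          refine integral_mono_ae hfgsI.abs (i1.add i2) ?_
          exact Filter.Eventually.of_forall hptw
      _ = (t / 2) * (∫ x, (x - c) ^ 2 * s x ^ 2 ∂μ)
          + (1 / (2 * t)) * (∫ x, g x ^ 2 ∂μ) := by
          rw [integral_add i1 i2, integral_const_mul, integral_const_mul]
  have hkey : |a| ≤ |a| / 2 + B * H / |a| := by
    have e1 : (t / 2) * B = |a| / 2 := by
      rw [htdef]; field_simp
    have e2 : (1 / (2 * t)) * (2 * H) = B * H / |a| := by
      rw [htdef]; field_simp
    have h2 : (t / 2) * (∫ x, (x - c) ^ 2 * s x ^ 2 ∂μ) ≤ (t / 2) * B :=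
      mul_le_mul_of_nonneg_left hIf2s2 (by linarith)
    rw [hIg2] at habs
    rw [← e1, ← e2]
    linarith
  rw [div_le_iff₀ (by linarith : (0:ℝ) < 2 * B)]
  have h4 : |a| * |a| ≤ (|a| / 2 + B * H / |a|) * |a| :=
    mul_le_mul_of_nonneg_right hkey (le_of_lt hta)
  have h5 : (B * H / |a|) * |a| = B * H := div_mul_cancel₀ _ hta.ne'
  nlinarith [sq_abs a, h4, h5]

set_option maxHeartbeats 1000000 in
theorem hellinger_lower_bound_weak
    (P Q : Measure ℝ) [IsProbabilityMeasure P] [IsProbabilityMeasure Q]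
    (mP mQ σP σQ : ℝ) (hσP : 0 ≤ σP) (hσQ : 0 ≤ σQ)
    (hP1 : Integrable (fun x => x) P) (hP2 : Integrable (fun x => x ^ 2) P)
    (hQ1 : Integrable (fun x => x) Q) (hQ2 : Integrable (fun x => x ^ 2) Q)
    (hmP : ∫ x, x ∂P = mP) (hmQ : ∫ x, x ∂Q = mQ)
    (hvP : ∫ x, (x - mP) ^ 2 ∂P = σP ^ 2) (hvQ : ∫ x, (x - mQ) ^ 2 ∂Q = σQ ^ 2)
    (hne : mP ≠ mQ) :
    hellingerSq P Q ≥
      (mP - mQ) ^ 2 / (2 * ((mP - mQ) ^ 2 + 2 * (σP ^ 2 + σQ ^ 2))) := by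
  set μ : Measure ℝ := P + Q with hμdef
  set a : ℝ := mP - mQ with hadef
  set c : ℝ := (mP + mQ) / 2 with hcdef
  set B : ℝ := a ^ 2 + 2 * (σP ^ 2 + σQ ^ 2) with hBdef
  set p : ℝ → ℝ := fun x => (P.rnDeriv μ x).toReal with hpdef
  set q : ℝ → ℝ := fun x => (Q.rnDeriv μ x).toReal with hqdef
  set H : ℝ := hellingerSq P Q with hHdef
  have ha : a ≠ 0 := sub_ne_zero.mpr hne
  have ha2 : 0 < a ^ 2 := lt_of_le_of_ne (sq_nonneg a) (Ne.symm (pow_ne_zero 2 ha))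
  have hB : 0 < B := by
    have := sq_nonneg σP; have := sq_nonneg σQ
    rw [hBdef]; nlinarith
  -- absolute continuity
  have hPac : P ≪ μ := Measure.absolutelyContinuous_of_le (Measure.le_add_right le_rfl)
  have hQac : Q ≪ μ := Measure.absolutelyContinuous_of_le (Measure.le_add_left le_rfl)
  -- a.e. p + q = 1
  have hpq1 : ∀ᵐ x ∂μ, p x + q x = 1 := by
    filter_upwards [Measure.rnDeriv_add P Q μ, Measure.rnDeriv_self μ,
      Measure.rnDeriv_lt_top P μ, Measure.rnDeriv_lt_top Q μ] with x h1 h2 h3 h4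
    have : P.rnDeriv μ x + Q.rnDeriv μ x = 1 := by
      have h1' : μ.rnDeriv μ x = P.rnDeriv μ x + Q.rnDeriv μ x := h1
      rw [h2] at h1'; exact h1'.symm
    rw [hpdef, hqdef]
    simp only
    rw [← ENNReal.toReal_add h3.ne h4.ne, this, ENNReal.toReal_one]
  have hp0 : ∀ x, 0 ≤ p x := fun x => ENNReal.toReal_nonneg
  have hq0 : ∀ x, 0 ≤ q x := fun x => ENNReal.toReal_nonneg
  -- measurability
  have hpm : Measurable p := (Measure.measurable_rnDeriv P μ).ennreal_toReal
  have hqm : Measurable q := (Measure.measurable_rnDeriv Q μ).ennreal_toReal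
  have hgm : Measurable (fun x => Real.sqrt (p x) - Real.sqrt (q x)) :=
    (Real.continuous_sqrt.measurable.comp hpm).sub (Real.continuous_sqrt.measurable.comp hqm)
  have hsm : Measurable (fun x => Real.sqrt (p x) + Real.sqrt (q x)) :=
    (Real.continuous_sqrt.measurable.comp hpm).add (Real.continuous_sqrt.measurable.comp hqm)
  -- notation for factors
  set g : ℝ → ℝ := fun x => Real.sqrt (p x) - Real.sqrt (q x) with hgdef
  set s : ℝ → ℝ := fun x => Real.sqrt (p x) + Real.sqrt (q x) with hsdef
  have hsg : ∀ x, g x * s x = p x - q x := by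
    intro x
    have h1 : Real.sqrt (p x) ^ 2 = p x := Real.sq_sqrt (hp0 x)
    have h2 : Real.sqrt (q x) ^ 2 = q x := Real.sq_sqrt (hq0 x)
    rw [hgdef, hsdef]; simp only
    linear_combination h1 - h2
  -- a.e. bounds
  have hbounds : ∀ᵐ x ∂μ, g x ^ 2 ≤ 2 ∧ s x ^ 2 ≤ 2 ∧ |p x - q x| ≤ 1 := by
    filter_upwards [hpq1] with x h1
    have hsp : Real.sqrt (p x) ^ 2 = p x := Real.sq_sqrt (hp0 x)
    have hsq : Real.sqrt (q x) ^ 2 = q x := Real.sq_sqrt (hq0 x)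
    refine ⟨?_, ?_, ?_⟩
    · rw [hgdef]; simp only
      nlinarith [sq_nonneg (Real.sqrt (p x) + Real.sqrt (q x))]
    · rw [hsdef]; simp only
      nlinarith [sq_nonneg (Real.sqrt (p x) - Real.sqrt (q x))]
    · rw [abs_le]; constructor <;> nlinarith [hp0 x, hq0 x]
  -- integrability of basic functions
  have hfP : Integrable (fun x => x - c) P := hP1.sub (integrable_const c)
  have hfQ : Integrable (fun x => x - c) Q := hQ1.sub (integrable_const c)
  have hf1 : Integrable (fun x => x - c) μ := hfP.add_measure hfQ
  have hf2P : Integrable (fun x => (x - c) ^ 2) P := shift_sq_int P hP1 hP2 c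
  have hf2Q : Integrable (fun x => (x - c) ^ 2) Q := shift_sq_int Q hQ1 hQ2 c
  have hf2 : Integrable (fun x => (x - c) ^ 2) μ := hf2P.add_measure hf2Q
  -- second moments
  have hP2' : ∫ x, x ^ 2 ∂P = σP ^ 2 + mP ^ 2 := by
    have := shift_sq_eq P hP1 hP2 mP
    rw [hvP, hmP] at this; linarith
  have hQ2' : ∫ x, x ^ 2 ∂Q = σQ ^ 2 + mQ ^ 2 := by
    have := shift_sq_eq Q hQ1 hQ2 mQ
    rw [hvQ, hmQ] at this; linarith
  have hIf2P : ∫ x, (x - c) ^ 2 ∂P = σP ^ 2 + (a / 2) ^ 2 := by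
    rw [shift_sq_eq P hP1 hP2 c, hP2', hmP, hcdef, hadef]; ring
  have hIf2Q : ∫ x, (x - c) ^ 2 ∂Q = σQ ^ 2 + (a / 2) ^ 2 := by
    rw [shift_sq_eq Q hQ1 hQ2 c, hQ2', hmQ, hcdef, hadef]; ring
  have hIf2 : ∫ x, (x - c) ^ 2 ∂μ = B / 2 := by
    rw [hμdef, integral_add_measure hf2P hf2Q, hIf2P, hIf2Q, hBdef]; ring
  -- the mean identity: a = ∫ (x - c) * (g x * s x) dμ
  have hfpI : Integrable (fun x => p x * (x - c)) μ := by
    exact (MeasureTheory.integrable_rnDeriv_smul_iff (f := fun x => x - c) hPac).mpr hfP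
  have hfqI : Integrable (fun x => q x * (x - c)) μ := by
    exact (MeasureTheory.integrable_rnDeriv_smul_iff (f := fun x => x - c) hQac).mpr hfQ
  have hIfp : ∫ x, p x * (x - c) ∂μ = a / 2 := by
    have h := MeasureTheory.integral_rnDeriv_smul hPac (f := fun x => x - c)
    simp only [smul_eq_mul] at h
    rw [h, integral_sub hP1 (integrable_const c), hmP, integral_const]
    simp [measure_univ, hcdef, hadef]; ring
  have hIfq : ∫ x, q x * (x - c) ∂μ = -(a / 2) := by
    have h := MeasureTheory.integral_rnDeriv_smul hQac (f := fun x => x - c)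
    simp only [smul_eq_mul] at h
    rw [h, integral_sub hQ1 (integrable_const c), hmQ, integral_const]
    simp [measure_univ, hcdef, hadef]; ring
  have hmean : ∫ x, (x - c) * (g x * s x) ∂μ = a := by
    have heq : (fun x => (x - c) * (g x * s x)) = fun x => p x * (x - c) - q x * (x - c) := by
      ext x; rw [hsg x]; ring
    rw [heq, integral_sub hfpI hfqI, hIfp, hIfq]; ring
  have hmain := hellinger_aux μ p q hpm hqm hp0 hq0 hpq1 a B c ha hB hf1 hf2 hIf2 hmean
  calc a ^ 2 / (2 * B) ≤ (1 / 2) * ∫ x, (Real.sqrt (p x) - Real.sqrt (q x)) ^ 2 ∂μ := hmain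
    _ = hellingerSq P Q := by
        unfold hellingerSq
        simp only [hpdef, hqdef, hμdef]
end

section
/- Let P and Q be Borel probability measures on the real line with means m_P, m_Q and variances σ_P², σ_Q² respectively, and suppose m_P ≠ m_Q. Set a := m_P − m_Q. Then the Bhattacharyya coefficient satisfies ρ(P,Q) ≤ √(1 − a²/(a² + (σ_P + σ_Q)²)) = √((σ_P + σ_Q)²/(a² + (σ_P + σ_Q)²)). -/
/-!
Put `μ = P + Q`, `f = √(dP/dμ)` and `g = √(dQ/dμ)`: unit vectors of `L²(μ)` with `⟪f, g⟫ = ρ`.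
The vector `(x - m_P) f` has norm `σ_P` and is orthogonal to `f`, so projecting `f` out of `g`
before applying Cauchy–Schwarz gives `A := ⟪g, (x - m_P) f⟫` with `A² ≤ (1 - ρ²) σ_P²`, and
symmetrically `B := ⟪f, (x - m_Q) g⟫` with `B² ≤ (1 - ρ²) σ_Q²`. As `B - A = (m_P - m_Q) ρ`,
this yields `(m_P - m_Q)² ρ² ≤ (1 - ρ²) (σ_P + σ_Q)²`, which rearranges to the bound.
-/

open MeasureTheory Real

/-- The Bhattacharyya coefficient `ρ(P,Q) = ∫ √(pq) dμ`, computed with respect to the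
dominating measure `μ = P + Q` (the value is independent of the choice of dominating
measure). -/
noncomputable def bhattacharyya (P Q : Measure ℝ) : ℝ :=
  ∫ x, Real.sqrt (((P.rnDeriv (P + Q)) x).toReal *
    ((Q.rnDeriv (P + Q)) x).toReal) ∂(P + Q)

theorem real_inner_sq_le_of_inner_eq_zero {E : Type*} [NormedAddCommGroup E]
    [InnerProductSpace ℝ E] {φ ψ v : E} (hφ : ‖φ‖ = 1) (hφv : inner ℝ φ v = 0) :
    inner ℝ ψ v ^ 2 ≤ (‖ψ‖ ^ 2 - inner ℝ φ ψ ^ 2) * ‖v‖ ^ 2 := by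
  set c := inner ℝ φ ψ
  have hproj : inner ℝ ψ v = inner ℝ (ψ - c • φ) v := by
    rw [inner_sub_left, real_inner_smul_left, hφv, mul_zero, sub_zero]
  have hnorm : ‖ψ - c • φ‖ ^ 2 = ‖ψ‖ ^ 2 - c ^ 2 := by
    rw [norm_sub_sq_real, norm_smul, real_inner_smul_right, real_inner_comm, hφ, norm_eq_abs,
      mul_one, sq_abs]
    ring
  rw [hproj, ← hnorm, ← mul_pow, ← sq_abs]
  exact pow_le_pow_left₀ (abs_nonneg _) (abs_real_inner_le_norm _ _) 2

section L2

variable {α : Type*} [MeasurableSpace α] {μ : Measure α} {φ ψ v : α → ℝ}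

theorem MeasureTheory.MemLp.inner_toLp_toLp (hφ : MemLp φ 2 μ) (hψ : MemLp ψ 2 μ) :
    inner ℝ (hφ.toLp φ) (hψ.toLp ψ) = ∫ x, φ x * ψ x ∂μ := by
  rw [L2.inner_def]
  refine integral_congr_ae ?_
  filter_upwards [hφ.coeFn_toLp, hψ.coeFn_toLp] with x hφx hψx
  rw [hφx, hψx, real_inner_eq_re_inner, RCLike.inner_apply, conj_trivial, mul_comm]
  rfl

theorem MeasureTheory.MemLp.norm_toLp_sq (hφ : MemLp φ 2 μ) :
    ‖hφ.toLp φ‖ ^ 2 = ∫ x, φ x ^ 2 ∂μ := by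
  rw [← real_inner_self_eq_norm_sq, hφ.inner_toLp_toLp]
  simp_rw [sq]

theorem sq_integral_mul_le_of_integral_mul_eq_zero (hφ : MemLp φ 2 μ) (hψ : MemLp ψ 2 μ)
    (hv : MemLp v 2 μ) (hφ1 : ∫ x, φ x ^ 2 ∂μ = 1) (hφv : ∫ x, φ x * v x ∂μ = 0) :
    (∫ x, ψ x * v x ∂μ) ^ 2 ≤
      (∫ x, ψ x ^ 2 ∂μ - (∫ x, φ x * ψ x ∂μ) ^ 2) * ∫ x, v x ^ 2 ∂μ := by
  have hφ1' : ‖hφ.toLp φ‖ = 1 := by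
    rw [← pow_eq_one_iff_of_nonneg (norm_nonneg _) two_ne_zero, hφ.norm_toLp_sq, hφ1]
  have := real_inner_sq_le_of_inner_eq_zero (ψ := hψ.toLp ψ) hφ1'
    (by rwa [hφ.inner_toLp_toLp hv])
  rwa [hψ.inner_toLp_toLp, hφ.inner_toLp_toLp, hψ.norm_toLp_sq, hv.norm_toLp_sq] at this

end L2

section SqrtRnDeriv

variable {α : Type*} [MeasurableSpace α] {ν μ : Measure α}

noncomputable def sqrtRnDeriv (ν μ : Measure α) (x : α) : ℝ :=
  √(ν.rnDeriv μ x).toReal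

theorem measurable_sqrtRnDeriv : Measurable (sqrtRnDeriv ν μ) :=
  (Measure.measurable_rnDeriv ν μ).ennreal_toReal.sqrt

theorem sqrtRnDeriv_sq (x : α) : sqrtRnDeriv ν μ x ^ 2 = (ν.rnDeriv μ x).toReal :=
  sq_sqrt ENNReal.toReal_nonneg

variable [ν.HaveLebesgueDecomposition μ] [SigmaFinite ν]

theorem integral_mul_sqrtRnDeriv_sq (hνμ : ν ≪ μ) (h : α → ℝ) :
    ∫ x, h x * sqrtRnDeriv ν μ x ^ 2 ∂μ = ∫ x, h x ∂ν := by
  simp_rw [sqrtRnDeriv_sq, mul_comm (h _)]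
  exact integral_toReal_rnDeriv_mul hνμ

theorem memLp_mul_sqrtRnDeriv (hνμ : ν ≪ μ) {h : α → ℝ} (hm : AEStronglyMeasurable h μ)
    (hh : Integrable (fun x => h x ^ 2) ν) :
    MemLp (fun x => h x * sqrtRnDeriv ν μ x) 2 μ := by
  rw [memLp_two_iff_integrable_sq (f := fun x => h x * sqrtRnDeriv ν μ x)
    (hm.mul measurable_sqrtRnDeriv.aestronglyMeasurable)]
  simp_rw [mul_pow, sqrtRnDeriv_sq, mul_comm (h _ ^ 2)]
  exact (integrable_toReal_rnDeriv_mul_iff hνμ).mpr hh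

theorem memLp_sqrtRnDeriv [IsFiniteMeasure ν] (hνμ : ν ≪ μ) :
    MemLp (sqrtRnDeriv ν μ) 2 μ := by
  simpa using memLp_mul_sqrtRnDeriv hνμ aestronglyMeasurable_const (h := fun _ => (1 : ℝ))
    (integrable_const _)

theorem integral_sqrtRnDeriv_sq [IsProbabilityMeasure ν] (hνμ : ν ≪ μ) :
    ∫ x, sqrtRnDeriv ν μ x ^ 2 ∂μ = 1 := by
  simpa using integral_mul_sqrtRnDeriv_sq hνμ fun _ => 1

theorem integral_sq_mul_sqrtRnDeriv (hνμ : ν ≪ μ) (h : α → ℝ) :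
    ∫ x, (h x * sqrtRnDeriv ν μ x) ^ 2 ∂μ = ∫ x, h x ^ 2 ∂ν := by
  simp_rw [mul_pow]
  exact integral_mul_sqrtRnDeriv_sq hνμ _

theorem integral_sqrtRnDeriv_mul_mul_sqrtRnDeriv (hνμ : ν ≪ μ) (h : α → ℝ) :
    ∫ x, sqrtRnDeriv ν μ x * (h x * sqrtRnDeriv ν μ x) ∂μ = ∫ x, h x ∂ν := by
  rw [← integral_mul_sqrtRnDeriv_sq hνμ]
  congr 1 with x
  ring

end SqrtRnDeriv

section Centered

variable {ν ν' μ : Measure ℝ} [IsProbabilityMeasure ν] [ν.HaveLebesgueDecomposition μ]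
  [IsProbabilityMeasure ν'] [ν'.HaveLebesgueDecomposition μ]

theorem memLp_sub_mul_sqrtRnDeriv (hνμ : ν ≪ μ) (h2 : Integrable (fun x => x ^ 2) ν) (m : ℝ) :
    MemLp (fun x => (x - m) * sqrtRnDeriv ν μ x) 2 μ := by
  have hid : MemLp (fun x : ℝ => x) 2 ν := (memLp_two_iff_integrable_sq (by fun_prop)).mpr h2
  refine memLp_mul_sqrtRnDeriv hνμ (by fun_prop) ?_
  exact (memLp_two_iff_integrable_sq (by fun_prop)).mp (hid.sub (memLp_const m))

theorem integral_sqrtRnDeriv_mul_sub_mul_sqrtRnDeriv (hνμ : ν ≪ μ)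
    (h1 : Integrable (fun x => x) ν) {m : ℝ} (hm : ∫ x, x ∂ν = m) :
    ∫ x, sqrtRnDeriv ν μ x * ((x - m) * sqrtRnDeriv ν μ x) ∂μ = 0 := by
  rw [integral_sqrtRnDeriv_mul_mul_sqrtRnDeriv hνμ, integral_sub h1 (integrable_const m), hm]
  simp

theorem sq_integral_sqrtRnDeriv_mul_sub_mul_sqrtRnDeriv_le (hνμ : ν ≪ μ) (hν'μ : ν' ≪ μ)
    (h1 : Integrable (fun x => x) ν) (h2 : Integrable (fun x => x ^ 2) ν) {m : ℝ}
    (hm : ∫ x, x ∂ν = m) :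
    (∫ x, sqrtRnDeriv ν' μ x * ((x - m) * sqrtRnDeriv ν μ x) ∂μ) ^ 2 ≤
      (1 - (∫ x, sqrtRnDeriv ν μ x * sqrtRnDeriv ν' μ x ∂μ) ^ 2) * ∫ x, (x - m) ^ 2 ∂ν := by
  have := sq_integral_mul_le_of_integral_mul_eq_zero (memLp_sqrtRnDeriv hνμ)
    (memLp_sqrtRnDeriv hν'μ) (memLp_sub_mul_sqrtRnDeriv hνμ h2 m) (integral_sqrtRnDeriv_sq hνμ)
    (integral_sqrtRnDeriv_mul_sub_mul_sqrtRnDeriv hνμ h1 hm)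
  rwa [integral_sqrtRnDeriv_sq hν'μ, integral_sq_mul_sqrtRnDeriv hνμ] at this

theorem integral_sqrtRnDeriv_cross_sub (hνμ : ν ≪ μ) (hν'μ : ν' ≪ μ)
    (h2 : Integrable (fun x => x ^ 2) ν) (h2' : Integrable (fun x => x ^ 2) ν') (m m' : ℝ) :
    ∫ x, sqrtRnDeriv ν μ x * ((x - m') * sqrtRnDeriv ν' μ x) ∂μ -
        ∫ x, sqrtRnDeriv ν' μ x * ((x - m) * sqrtRnDeriv ν μ x) ∂μ =
      (m - m') * ∫ x, sqrtRnDeriv ν μ x * sqrtRnDeriv ν' μ x ∂μ := by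
  have hi : Integrable (fun x => sqrtRnDeriv ν μ x * ((x - m') * sqrtRnDeriv ν' μ x)) μ :=
    (memLp_sqrtRnDeriv hνμ).integrable_mul (memLp_sub_mul_sqrtRnDeriv hν'μ h2' m')
  have hi' : Integrable (fun x => sqrtRnDeriv ν' μ x * ((x - m) * sqrtRnDeriv ν μ x)) μ :=
    (memLp_sqrtRnDeriv hν'μ).integrable_mul (memLp_sub_mul_sqrtRnDeriv hνμ h2 m)
  rw [← integral_sub hi hi', ← integral_const_mul]
  congr 1 with x
  ring

end Centered

theorem sub_sq_le_mul_add_sq {A B w s t : ℝ} (hs : 0 ≤ s) (ht : 0 ≤ t)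
    (hA : A ^ 2 ≤ w * s ^ 2) (hB : B ^ 2 ≤ w * t ^ 2) : (B - A) ^ 2 ≤ w * (s + t) ^ 2 := by
  have hwst : 0 ≤ w * s * t := by
    rcases (mul_nonneg hs ht).eq_or_lt with hst | hst
    · rw [mul_assoc, ← hst, mul_zero]
    · have : 0 ≤ w * s * t * (s * t) := by nlinarith [sq_nonneg A, sq_nonneg t]
      exact nonneg_of_mul_nonneg_left this hst
  have hAB : (A * B) ^ 2 ≤ (w * s * t) ^ 2 := by
    have := mul_le_mul hA hB (sq_nonneg B) (le_trans (sq_nonneg A) hA)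
    nlinarith
  nlinarith [(abs_le_of_sq_le_sq' hAB hwst).1]

theorem le_sqrt_div_of_mul_sq_le {ρ a s : ℝ} (hρ : 0 ≤ ρ) (hpos : 0 < a ^ 2 + s ^ 2)
    (h : (a * ρ) ^ 2 ≤ (1 - ρ ^ 2) * s ^ 2) : ρ ≤ √(s ^ 2 / (a ^ 2 + s ^ 2)) := by
  rw [le_sqrt hρ (by positivity), le_div_iff₀ hpos]
  linarith

theorem bhattacharyya_eq_integral_sqrtRnDeriv_mul (P Q : Measure ℝ) :
    bhattacharyya P Q =
      ∫ x, sqrtRnDeriv P (P + Q) x * sqrtRnDeriv Q (P + Q) x ∂(P + Q) :=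
  integral_congr_ae (ae_of_all _ fun _ => sqrt_mul ENNReal.toReal_nonneg _)

theorem bhattacharyya_upper_bound
    (P Q : Measure ℝ) [IsProbabilityMeasure P] [IsProbabilityMeasure Q]
    (mP mQ σP σQ : ℝ) (hσP : 0 ≤ σP) (hσQ : 0 ≤ σQ)
    (hP1 : Integrable (fun x => x) P) (hP2 : Integrable (fun x => x ^ 2) P)
    (hQ1 : Integrable (fun x => x) Q) (hQ2 : Integrable (fun x => x ^ 2) Q)
    (hmP : ∫ x, x ∂P = mP) (hmQ : ∫ x, x ∂Q = mQ)
    (hvP : ∫ x, (x - mP) ^ 2 ∂P = σP ^ 2) (hvQ : ∫ x, (x - mQ) ^ 2 ∂Q = σQ ^ 2)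
    (hne : mP ≠ mQ) :
    bhattacharyya P Q ≤
      Real.sqrt (1 - (mP - mQ) ^ 2 / ((mP - mQ) ^ 2 + (σP + σQ) ^ 2)) ∧
    Real.sqrt (1 - (mP - mQ) ^ 2 / ((mP - mQ) ^ 2 + (σP + σQ) ^ 2)) =
      Real.sqrt ((σP + σQ) ^ 2 / ((mP - mQ) ^ 2 + (σP + σQ) ^ 2)) := by
  have hpos : 0 < (mP - mQ) ^ 2 + (σP + σQ) ^ 2 :=
    add_pos_of_pos_of_nonneg (sq_pos_of_ne_zero (sub_ne_zero.mpr hne)) (sq_nonneg _)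
  have hrhs : 1 - (mP - mQ) ^ 2 / ((mP - mQ) ^ 2 + (σP + σQ) ^ 2) =
      (σP + σQ) ^ 2 / ((mP - mQ) ^ 2 + (σP + σQ) ^ 2) := by
    field_simp
    ring
  refine ⟨?_, by rw [hrhs]⟩
  set μ := P + Q
  have hPμ : P ≪ μ := Measure.AbsolutelyContinuous.rfl.add_right Q
  have hQμ : Q ≪ μ := Measure.AbsolutelyContinuous.rfl.add_right' P
  have hA := sq_integral_sqrtRnDeriv_mul_sub_mul_sqrtRnDeriv_le hPμ hQμ hP1 hP2 hmP
  have hB := sq_integral_sqrtRnDeriv_mul_sub_mul_sqrtRnDeriv_le hQμ hPμ hQ1 hQ2 hmQ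
  rw [hvP] at hA
  simp_rw [hvQ, mul_comm (sqrtRnDeriv Q μ _) (sqrtRnDeriv P μ _)] at hB
  rw [bhattacharyya_eq_integral_sqrtRnDeriv_mul, hrhs]
  refine le_sqrt_div_of_mul_sq_le (integral_nonneg fun x => ?_) hpos ?_
  · exact mul_nonneg (sqrt_nonneg _) (sqrt_nonneg _)
  · rw [← integral_sqrtRnDeriv_cross_sub hPμ hQμ hP2 hQ2 mP mQ]
    exact sub_sq_le_mul_add_sq hσP hσQ hA hB
end

section
/- Let m_P, m_Q ∈ ℝ with m_P ≠ m_Q and σ_P, σ_Q ≥ 0. Set a := m_P − m_Q, b := σ_Q² − σ_P², v := (1/(2|a|))√(b² + 2a²(σ_P² + σ_Q²) + a⁴), r := 1/2 + (b + a²)/(4av), s := 1/2 + (b − a²)/(4av). Then (√(rs) + √((1−r)(1−s)))² = 1 − a²/(a² + (σ_P + σ_Q)²). -/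
open Real

theorem bhattacharyya_binary_identity
    (mP mQ σP σQ : ℝ) (hne : mP ≠ mQ) (hσP : 0 ≤ σP) (hσQ : 0 ≤ σQ)
    (a b v r s : ℝ)
    (ha : a = mP - mQ) (hb : b = σQ ^ 2 - σP ^ 2)
    (hv : v = (1 / (2 * |a|)) *
      Real.sqrt (b ^ 2 + 2 * a ^ 2 * (σP ^ 2 + σQ ^ 2) + a ^ 4))
    (hr : r = 1 / 2 + (b + a ^ 2) / (4 * a * v))
    (hs : s = 1 / 2 + (b - a ^ 2) / (4 * a * v)) :
    (Real.sqrt (r * s) + Real.sqrt ((1 - r) * (1 - s))) ^ 2 =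
      1 - a ^ 2 / (a ^ 2 + (σP + σQ) ^ 2) := by
  have ha0 : a ≠ 0 := by rw [ha]; exact sub_ne_zero.mpr hne
  subst hb
  obtain ⟨D, hD⟩ : ∃ D : ℝ,
      D = (σQ ^ 2 - σP ^ 2) ^ 2 + 2 * a ^ 2 * (σP ^ 2 + σQ ^ 2) + a ^ 4 := ⟨_, rfl⟩
  rw [← hD] at hv
  have hDpos : 0 < D := by rw [hD]; positivity
  have hDne : D ≠ 0 := hDpos.ne'
  have hv2 : 4 * a ^ 2 * v ^ 2 = D := by
    have hS : Real.sqrt D ^ 2 = D := Real.sq_sqrt hDpos.le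
    rw [hv, mul_pow, hS, div_pow, one_pow, mul_pow, sq_abs]
    field_simp
    ring
  have hvne : v ≠ 0 := by
    have h0 : (0:ℝ) < 4 * a ^ 2 * v ^ 2 := by rw [hv2]; exact hDpos
    intro h; rw [h] at h0; norm_num at h0
  have hw : (4:ℝ) * a * v ≠ 0 :=
    mul_ne_zero (mul_ne_zero (by norm_num) ha0) hvne
  have h4D : (4:ℝ) * D ≠ 0 := by positivity
  have eXY : (σQ ^ 2 - σP ^ 2 + a ^ 2) / (4 * a * v) *
      ((σQ ^ 2 - σP ^ 2 - a ^ 2) / (4 * a * v)) =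
      ((σQ ^ 2 - σP ^ 2) ^ 2 - a ^ 4) / (4 * D) := by
    rw [div_mul_div_comm, div_eq_div_iff (mul_ne_zero hw hw) h4D]
    linear_combination (-4) * ((σQ ^ 2 - σP ^ 2) ^ 2 - a ^ 4) * hv2
  have hsum : r * s + (1 - r) * (1 - s) =
      1 / 2 + 2 * (((σQ ^ 2 - σP ^ 2) ^ 2 - a ^ 4) / (4 * D)) := by
    rw [hr, hs]
    linear_combination 2 * eXY
  have eX : ((σQ ^ 2 - σP ^ 2 + a ^ 2) / (4 * a * v)) ^ 2 =
      (σQ ^ 2 - σP ^ 2 + a ^ 2) ^ 2 / (4 * D) := by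
    rw [div_pow, div_eq_div_iff (pow_ne_zero 2 hw) h4D]
    linear_combination (-4) * (σQ ^ 2 - σP ^ 2 + a ^ 2) ^ 2 * hv2
  have eY : ((σQ ^ 2 - σP ^ 2 - a ^ 2) / (4 * a * v)) ^ 2 =
      (σQ ^ 2 - σP ^ 2 - a ^ 2) ^ 2 / (4 * D) := by
    rw [div_pow, div_eq_div_iff (pow_ne_zero 2 hw) h4D]
    linear_combination (-4) * (σQ ^ 2 - σP ^ 2 - a ^ 2) ^ 2 * hv2
  have hprod : (r * s) * ((1 - r) * (1 - s)) = (a ^ 2 * σP * σQ / D) ^ 2 := by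
    have step : (r * s) * ((1 - r) * (1 - s)) =
        (1 / 4 - ((σQ ^ 2 - σP ^ 2 + a ^ 2) / (4 * a * v)) ^ 2) *
        (1 / 4 - ((σQ ^ 2 - σP ^ 2 - a ^ 2) / (4 * a * v)) ^ 2) := by
      rw [hr, hs]; ring
    rw [step, eX, eY, hD]
    have h0 : (σQ ^ 2 - σP ^ 2) ^ 2 + 2 * a ^ 2 * (σP ^ 2 + σQ ^ 2) + a ^ 4 ≠ 0 := by
      positivity
    field_simp
    ring
  have hnum : 0 ≤ D + ((σQ ^ 2 - σP ^ 2) ^ 2 - a ^ 4) := by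
    rw [hD]
    nlinarith [sq_nonneg (σQ ^ 2 - σP ^ 2), sq_nonneg (a * σP), sq_nonneg (a * σQ)]
  have hsum_nonneg : 0 ≤ r * s + (1 - r) * (1 - s) := by
    rw [hsum, show (1:ℝ) / 2 + 2 * (((σQ ^ 2 - σP ^ 2) ^ 2 - a ^ 4) / (4 * D)) =
        (D + ((σQ ^ 2 - σP ^ 2) ^ 2 - a ^ 4)) / (2 * D) from by
      field_simp; ring]
    exact div_nonneg hnum (by linarith)
  have hc0 : 0 ≤ a ^ 2 * σP * σQ / D :=
    div_nonneg (mul_nonneg (mul_nonneg (sq_nonneg a) hσP) hσQ) hDpos.le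
  have hrs0 : 0 ≤ r * s := by
    by_contra h
    push_neg at h
    have hy : 0 < (1 - r) * (1 - s) := by linarith
    have hlt : (r * s) * ((1 - r) * (1 - s)) < 0 := mul_neg_of_neg_of_pos h hy
    rw [hprod] at hlt
    exact absurd hlt (not_lt.mpr (sq_nonneg _))
  have hu0 : 0 ≤ (1 - r) * (1 - s) := by
    by_contra h
    push_neg at h
    have hy : 0 < r * s := by linarith
    have hlt : (r * s) * ((1 - r) * (1 - s)) < 0 := mul_neg_of_pos_of_neg hy h
    rw [hprod] at hlt
    exact absurd hlt (not_lt.mpr (sq_nonneg _))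
  have hcross : Real.sqrt (r * s) * Real.sqrt ((1 - r) * (1 - s)) =
      a ^ 2 * σP * σQ / D := by
    rw [← Real.sqrt_mul hrs0, hprod, Real.sqrt_sq hc0]
  have hfinal : r * s + (1 - r) * (1 - s) + 2 * (a ^ 2 * σP * σQ / D) =
      1 - a ^ 2 / (a ^ 2 + (σP + σQ) ^ 2) := by
    rw [hsum, hD]
    have hT : (0:ℝ) < a ^ 2 + (σP + σQ) ^ 2 := by positivity
    have h0 : (σQ ^ 2 - σP ^ 2) ^ 2 + 2 * a ^ 2 * (σP ^ 2 + σQ ^ 2) + a ^ 4 ≠ 0 := by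
      positivity
    field_simp
    ring
  rw [add_sq, Real.sq_sqrt hrs0, Real.sq_sqrt hu0]
  linear_combination 2 * hcross + hfinal
end

section
/- Let m_P, m_Q ∈ ℝ with m_P ≠ m_Q and σ_P, σ_Q ≥ 0. Set a := m_P − m_Q, b := σ_Q² − σ_P², v := (1/(2|a|))√(b² + 2a²(σ_P² + σ_Q²) + a⁴). Then 4a²v² = (a² + (σ_P + σ_Q)²)·(a² + (σ_P − σ_Q)²), and the quantities r := 1/2 + (b + a²)/(4av) and s := 1/2 + (b − a²)/(4av) both lie in the interval [0,1], with √(r(1−r)) = σ_P/(2v) and √(s(1−s)) = σ_Q/(2v). -/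
/-!
Writing `r = 1/2 + c/(4av)`, one has `r (1 - r) = 1/4 - c² / (16 a² v²)`, and the choice of `v`
makes `4a²v² - (b + a²)² = 4a²σ_P²` and `4a²v² - (b - a²)² = 4a²σ_Q²`. Hence `r (1 - r)` and
`s (1 - s)` are the squares of `σ_P/(2v)` and `σ_Q/(2v)`; being nonnegative, they force `r` and `s`
into `[0, 1]`.
-/

open Real

lemma mem_Icc_of_mul_one_sub_nonneg {r : ℝ} (h : 0 ≤ r * (1 - r)) : r ∈ Set.Icc (0 : ℝ) 1 := by
  constructor <;> nlinarith

lemma sq_add_two_mul_sq_add_sq_eq_mul (a p q : ℝ) :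
    (q ^ 2 - p ^ 2) ^ 2 + 2 * a ^ 2 * (p ^ 2 + q ^ 2) + a ^ 4 =
      (a ^ 2 + (p + q) ^ 2) * (a ^ 2 + (p - q) ^ 2) := by
  ring

lemma four_mul_sq_mul_sq_inv_two_abs_mul_sqrt {a D : ℝ} (ha : a ≠ 0) (hD : 0 ≤ D) :
    4 * a ^ 2 * (1 / (2 * |a|) * √D) ^ 2 = D := by
  rw [mul_pow, sq_sqrt hD, div_pow, mul_pow, sq_abs]
  field_simp
  ring

lemma half_add_div_mul_one_sub_eq_sq {a v c p : ℝ} (ha : a ≠ 0) (hv : v ≠ 0)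
    (h : 4 * a ^ 2 * v ^ 2 = c ^ 2 + 4 * a ^ 2 * p ^ 2) :
    (1 / 2 + c / (4 * a * v)) * (1 - (1 / 2 + c / (4 * a * v))) = (p / (2 * v)) ^ 2 := by
  field_simp
  linear_combination 4 * h

lemma mem_Icc_and_sqrt_mul_one_sub_eq {r p v : ℝ} (hp : 0 ≤ p) (hv : 0 < v)
    (h : r * (1 - r) = (p / (2 * v)) ^ 2) :
    r ∈ Set.Icc (0 : ℝ) 1 ∧ √(r * (1 - r)) = p / (2 * v) :=
  ⟨mem_Icc_of_mul_one_sub_nonneg (h ▸ sq_nonneg _), by rw [h, sqrt_sq (by positivity)]⟩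

theorem binary_params_identities
    (mP mQ σP σQ : ℝ) (hne : mP ≠ mQ) (hσP : 0 ≤ σP) (hσQ : 0 ≤ σQ)
    (a b v r s : ℝ)
    (ha : a = mP - mQ) (hb : b = σQ ^ 2 - σP ^ 2)
    (hv : v = (1 / (2 * |a|)) *
      Real.sqrt (b ^ 2 + 2 * a ^ 2 * (σP ^ 2 + σQ ^ 2) + a ^ 4))
    (hr : r = 1 / 2 + (b + a ^ 2) / (4 * a * v))
    (hs : s = 1 / 2 + (b - a ^ 2) / (4 * a * v)) :
    4 * a ^ 2 * v ^ 2 = (a ^ 2 + (σP + σQ) ^ 2) * (a ^ 2 + (σP - σQ) ^ 2) ∧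
    r ∈ Set.Icc (0 : ℝ) 1 ∧ s ∈ Set.Icc (0 : ℝ) 1 ∧
    Real.sqrt (r * (1 - r)) = σP / (2 * v) ∧
    Real.sqrt (s * (1 - s)) = σQ / (2 * v) := by
  have ha0 : a ≠ 0 := ha ▸ sub_ne_zero.mpr hne
  set D := b ^ 2 + 2 * a ^ 2 * (σP ^ 2 + σQ ^ 2) + a ^ 4 with hD
  have hDfac : D = (a ^ 2 + (σP + σQ) ^ 2) * (a ^ 2 + (σP - σQ) ^ 2) := by
    rw [hD, hb, sq_add_two_mul_sq_add_sq_eq_mul]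
  have hDpos : 0 < D := by
    rw [hDfac]
    have : 0 < a ^ 2 := by positivity
    positivity
  have hv2 : 4 * a ^ 2 * v ^ 2 = D := hv ▸ four_mul_sq_mul_sq_inv_two_abs_mul_sqrt ha0 hDpos.le
  have hvpos : 0 < v := hv ▸ mul_pos (by positivity) (sqrt_pos.mpr hDpos)
  obtain ⟨hrI, hrsqrt⟩ := mem_Icc_and_sqrt_mul_one_sub_eq hσP hvpos <| hr ▸
    half_add_div_mul_one_sub_eq_sq ha0 hvpos.ne' (by rw [hv2, hD, hb]; ring)
  obtain ⟨hsI, hssqrt⟩ := mem_Icc_and_sqrt_mul_one_sub_eq hσQ hvpos <| hs ▸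
    half_add_div_mul_one_sub_eq_sq ha0 hvpos.ne' (by rw [hv2, hD, hb]; ring)
  exact ⟨hv2.trans hDfac, hrI, hsI, hrsqrt, hssqrt⟩
end

section
/- Let m_P ≠ m_Q and σ_P, σ_Q > 0, and let N(m_P, σ_P²) and N(m_Q, σ_Q²) be real Gaussian distributions. Then the squared Hellinger distance satisfies H²(N(m_P, σ_P²), N(m_Q, σ_Q²)) = 1 − √(2σ_Pσ_Q/(σ_P² + σ_Q²)) · exp(−(m_P − m_Q)²/(4(σ_P² + σ_Q²))). -/
open MeasureTheory Real ProbabilityTheory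
open scoped ENNReal NNReal

lemma aux_sqrt_mul (mP mQ σP σQ : ℝ) (hσP : 0 < σP) (hσQ : 0 < σQ) (x : ℝ) :
    Real.sqrt (gaussianPDFReal mP (σP ^ 2).toNNReal x *
        gaussianPDFReal mQ (σQ ^ 2).toNNReal x) =
    (Real.sqrt (2 * σP * σQ / (σP ^ 2 + σQ ^ 2)) *
        Real.exp (-(mP - mQ) ^ 2 / (4 * (σP ^ 2 + σQ ^ 2)))) *
      gaussianPDFReal ((mP * σQ ^ 2 + mQ * σP ^ 2) / (σP ^ 2 + σQ ^ 2))
        (2 * σP ^ 2 * σQ ^ 2 / (σP ^ 2 + σQ ^ 2)).toNNReal x := by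
  have hs : (0:ℝ) < σP ^ 2 + σQ ^ 2 := by positivity
  have hvP : ((σP ^ 2).toNNReal : ℝ) = σP ^ 2 := Real.coe_toNNReal _ (by positivity)
  have hvQ : ((σQ ^ 2).toNNReal : ℝ) = σQ ^ 2 := Real.coe_toNNReal _ (by positivity)
  have hv' : ((2 * σP ^ 2 * σQ ^ 2 / (σP ^ 2 + σQ ^ 2)).toNNReal : ℝ)
      = 2 * σP ^ 2 * σQ ^ 2 / (σP ^ 2 + σQ ^ 2) := Real.coe_toNNReal _ (by positivity)
  have hRnn : 0 ≤ (Real.sqrt (2 * σP * σQ / (σP ^ 2 + σQ ^ 2)) *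
        Real.exp (-(mP - mQ) ^ 2 / (4 * (σP ^ 2 + σQ ^ 2)))) *
      gaussianPDFReal ((mP * σQ ^ 2 + mQ * σP ^ 2) / (σP ^ 2 + σQ ^ 2))
        (2 * σP ^ 2 * σQ ^ 2 / (σP ^ 2 + σQ ^ 2)).toNNReal x := by
    have := gaussianPDFReal_nonneg ((mP * σQ ^ 2 + mQ * σP ^ 2) / (σP ^ 2 + σQ ^ 2))
        (2 * σP ^ 2 * σQ ^ 2 / (σP ^ 2 + σQ ^ 2)).toNNReal x
    positivity
  rw [show gaussianPDFReal mP (σP ^ 2).toNNReal x * gaussianPDFReal mQ (σQ ^ 2).toNNReal x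
      = ((Real.sqrt (2 * σP * σQ / (σP ^ 2 + σQ ^ 2)) *
        Real.exp (-(mP - mQ) ^ 2 / (4 * (σP ^ 2 + σQ ^ 2)))) *
      gaussianPDFReal ((mP * σQ ^ 2 + mQ * σP ^ 2) / (σP ^ 2 + σQ ^ 2))
        (2 * σP ^ 2 * σQ ^ 2 / (σP ^ 2 + σQ ^ 2)).toNNReal x) ^ 2 from ?_,
    Real.sqrt_sq hRnn]
  simp only [gaussianPDFReal, hvP, hvQ, hv']
  have e1 : ((Real.sqrt (2*π*σP^2)))⁻¹ * (Real.sqrt (2*π*σQ^2))⁻¹ = (2*π*(σP*σQ))⁻¹ := by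
    rw [← Real.sqrt_inv, ← Real.sqrt_inv, ← Real.sqrt_mul (by positivity),
      show (2*π*σP^2)⁻¹ * (2*π*σQ^2)⁻¹ = ((2*π*(σP*σQ))⁻¹)^2 by field_simp]
    exact Real.sqrt_sq (by positivity)
  have e2 : (Real.sqrt (2 * σP * σQ / (σP ^ 2 + σQ ^ 2)))^2 = 2 * σP * σQ / (σP ^ 2 + σQ ^ 2) :=
    Real.sq_sqrt (by positivity)
  have e3 : ((Real.sqrt (2*π*(2 * σP ^ 2 * σQ ^ 2 / (σP ^ 2 + σQ ^ 2))))⁻¹)^2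
      = (2*π*(2 * σP ^ 2 * σQ ^ 2 / (σP ^ 2 + σQ ^ 2)))⁻¹ := by
    rw [← Real.sqrt_inv, Real.sq_sqrt (by positivity)]
  rw [mul_pow, mul_pow, mul_pow, e2, e3, sq (Real.exp _), sq (Real.exp _), ← Real.exp_add,
    ← Real.exp_add]
  rw [show (Real.sqrt (2*π*σP^2))⁻¹ * rexp (-(x - mP) ^ 2 / (2 * σP ^ 2)) *
      ((Real.sqrt (2*π*σQ^2))⁻¹ * rexp (-(x - mQ) ^ 2 / (2 * σQ ^ 2)))
      = ((Real.sqrt (2*π*σP^2))⁻¹ * (Real.sqrt (2*π*σQ^2))⁻¹) *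
        rexp (-(x - mP) ^ 2 / (2 * σP ^ 2) + -(x - mQ) ^ 2 / (2 * σQ ^ 2)) by
    simp only [Real.exp_add]; ring]
  rw [e1]
  conv_rhs => rw [mul_assoc]
  rw [show rexp (-(mP - mQ) ^ 2 / (4 * (σP ^ 2 + σQ ^ 2)) + -(mP - mQ) ^ 2 / (4 * (σP ^ 2 + σQ ^ 2))) *
      ((2*π*(2 * σP ^ 2 * σQ ^ 2 / (σP ^ 2 + σQ ^ 2)))⁻¹ *
        rexp (-(x - (mP * σQ ^ 2 + mQ * σP ^ 2) / (σP ^ 2 + σQ ^ 2)) ^ 2 /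
              (2 * (2 * σP ^ 2 * σQ ^ 2 / (σP ^ 2 + σQ ^ 2)))
            + -(x - (mP * σQ ^ 2 + mQ * σP ^ 2) / (σP ^ 2 + σQ ^ 2)) ^ 2 /
              (2 * (2 * σP ^ 2 * σQ ^ 2 / (σP ^ 2 + σQ ^ 2)))))
      = (2*π*(2 * σP ^ 2 * σQ ^ 2 / (σP ^ 2 + σQ ^ 2)))⁻¹ *
        rexp ((-(mP - mQ) ^ 2 / (4 * (σP ^ 2 + σQ ^ 2)) + -(mP - mQ) ^ 2 / (4 * (σP ^ 2 + σQ ^ 2)))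
          + (-(x - (mP * σQ ^ 2 + mQ * σP ^ 2) / (σP ^ 2 + σQ ^ 2)) ^ 2 /
              (2 * (2 * σP ^ 2 * σQ ^ 2 / (σP ^ 2 + σQ ^ 2)))
            + -(x - (mP * σQ ^ 2 + mQ * σP ^ 2) / (σP ^ 2 + σQ ^ 2)) ^ 2 /
              (2 * (2 * σP ^ 2 * σQ ^ 2 / (σP ^ 2 + σQ ^ 2))))) by
    simp only [Real.exp_add]; ring]
  conv_rhs => rw [← mul_assoc]
  congr 1
  · field_simp
  · rw [Real.exp_eq_exp]
    field_simp
    ring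

lemma aux_eq (mP mQ σP σQ : ℝ) (hσP : 0 < σP) (hσQ : 0 < σQ) :
    (fun x => Real.sqrt (gaussianPDFReal mP (σP ^ 2).toNNReal x) *
        Real.sqrt (gaussianPDFReal mQ (σQ ^ 2).toNNReal x))
      = fun x => (Real.sqrt (2 * σP * σQ / (σP ^ 2 + σQ ^ 2)) *
        Real.exp (-(mP - mQ) ^ 2 / (4 * (σP ^ 2 + σQ ^ 2)))) *
      gaussianPDFReal ((mP * σQ ^ 2 + mQ * σP ^ 2) / (σP ^ 2 + σQ ^ 2))
        (2 * σP ^ 2 * σQ ^ 2 / (σP ^ 2 + σQ ^ 2)).toNNReal x := by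
  funext x
  rw [← aux_sqrt_mul mP mQ σP σQ hσP hσQ x,
    Real.sqrt_mul (gaussianPDFReal_nonneg _ _ _)]

lemma aux_integrable (mP mQ σP σQ : ℝ) (hσP : 0 < σP) (hσQ : 0 < σQ) :
    Integrable (fun x => Real.sqrt (gaussianPDFReal mP (σP ^ 2).toNNReal x) *
        Real.sqrt (gaussianPDFReal mQ (σQ ^ 2).toNNReal x)) := by
  rw [aux_eq mP mQ σP σQ hσP hσQ]
  exact (integrable_gaussianPDFReal _ _).const_mul _

lemma aux_integral (mP mQ σP σQ : ℝ) (hσP : 0 < σP) (hσQ : 0 < σQ) :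
    ∫ x, Real.sqrt (gaussianPDFReal mP (σP ^ 2).toNNReal x) *
        Real.sqrt (gaussianPDFReal mQ (σQ ^ 2).toNNReal x)
      = Real.sqrt (2 * σP * σQ / (σP ^ 2 + σQ ^ 2)) *
        Real.exp (-(mP - mQ) ^ 2 / (4 * (σP ^ 2 + σQ ^ 2))) := by
  have hv' : (2 * σP ^ 2 * σQ ^ 2 / (σP ^ 2 + σQ ^ 2)).toNNReal ≠ 0 := by
    simp only [ne_eq, Real.toNNReal_eq_zero, not_le]; positivity
  rw [aux_eq mP mQ σP σQ hσP hσQ, integral_const_mul,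
    integral_gaussianPDFReal_eq_one _ hv', mul_one]

lemma aux_expand (mP mQ σP σQ : ℝ) (hσP : 0 < σP) (hσQ : 0 < σQ) :
    ∫ x, (Real.sqrt (gaussianPDFReal mP (σP ^ 2).toNNReal x) -
        Real.sqrt (gaussianPDFReal mQ (σQ ^ 2).toNNReal x)) ^ 2
      = 2 - 2 * (Real.sqrt (2 * σP * σQ / (σP ^ 2 + σQ ^ 2)) *
        Real.exp (-(mP - mQ) ^ 2 / (4 * (σP ^ 2 + σQ ^ 2)))) := by
  have hvP : (σP ^ 2).toNNReal ≠ 0 := by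
    simp only [ne_eq, Real.toNNReal_eq_zero, not_le]; positivity
  have hvQ : (σQ ^ 2).toNNReal ≠ 0 := by
    simp only [ne_eq, Real.toNNReal_eq_zero, not_le]; positivity
  have hiP := integrable_gaussianPDFReal mP (σP ^ 2).toNNReal
  have hiQ := integrable_gaussianPDFReal mQ (σQ ^ 2).toNNReal
  have hiPQ := aux_integrable mP mQ σP σQ hσP hσQ
  have hpt : ∀ x, (Real.sqrt (gaussianPDFReal mP (σP ^ 2).toNNReal x) -
        Real.sqrt (gaussianPDFReal mQ (σQ ^ 2).toNNReal x)) ^ 2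
      = (gaussianPDFReal mP (σP ^ 2).toNNReal x + gaussianPDFReal mQ (σQ ^ 2).toNNReal x)
        - 2 * (Real.sqrt (gaussianPDFReal mP (σP ^ 2).toNNReal x) *
          Real.sqrt (gaussianPDFReal mQ (σQ ^ 2).toNNReal x)) := by
    intro x
    rw [sub_sq, Real.sq_sqrt (gaussianPDFReal_nonneg _ _ _),
      Real.sq_sqrt (gaussianPDFReal_nonneg _ _ _)]
    ring
  simp_rw [hpt]
  have hiPQ' : Integrable (fun x => gaussianPDFReal mP (σP ^ 2).toNNReal x
      + gaussianPDFReal mQ (σQ ^ 2).toNNReal x) := hiP.add hiQ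
  rw [integral_sub hiPQ' (hiPQ.const_mul 2),
    integral_add hiP hiQ,
    integral_const_mul, integral_gaussianPDFReal_eq_one _ hvP,
    integral_gaussianPDFReal_eq_one _ hvQ, aux_integral mP mQ σP σQ hσP hσQ]
  norm_num

theorem hellinger_gaussian
    (mP mQ σP σQ : ℝ) (hne : mP ≠ mQ) (hσP : 0 < σP) (hσQ : 0 < σQ) :
    hellingerSq (gaussianReal mP (σP ^ 2).toNNReal) (gaussianReal mQ (σQ ^ 2).toNNReal) =
      1 - Real.sqrt (2 * σP * σQ / (σP ^ 2 + σQ ^ 2)) *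
        Real.exp (-(mP - mQ) ^ 2 / (4 * (σP ^ 2 + σQ ^ 2))) := by
  have hvP : (σP ^ 2).toNNReal ≠ 0 := by
    simp only [ne_eq, Real.toNNReal_eq_zero, not_le]; positivity
  have hvQ : (σQ ^ 2).toNNReal ≠ 0 := by
    simp only [ne_eq, Real.toNNReal_eq_zero, not_le]; positivity
  set P := gaussianReal mP (σP ^ 2).toNNReal with hP
  set Q := gaussianReal mQ (σQ ^ 2).toNNReal with hQ
  set dP := gaussianPDF mP (σP ^ 2).toNNReal with hdP
  set dQ := gaussianPDF mQ (σQ ^ 2).toNNReal with hdQ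
  set fP := gaussianPDFReal mP (σP ^ 2).toNNReal with hfP
  set fQ := gaussianPDFReal mQ (σQ ^ 2).toNNReal with hfQ
  have hd_meas : Measurable (fun x => dP x + dQ x) :=
    (measurable_gaussianPDF _ _).add (measurable_gaussianPDF _ _)
  have hPQ : P + Q = volume.withDensity (fun x => dP x + dQ x) := by
    rw [hP, hQ, gaussianReal_of_var_ne_zero _ hvP, gaussianReal_of_var_ne_zero _ hvQ,
      ← withDensity_add_left (measurable_gaussianPDF _ _)]
    rfl
  have hS_ne_zero : ∀ᵐ x ∂(volume : Measure ℝ), dP x + dQ x ≠ 0 :=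
    ae_of_all _ fun x =>
      (lt_of_lt_of_le (gaussianPDF_pos mP hvP x) le_self_add).ne'
  have hS_ne_top : ∀ᵐ x ∂(volume : Measure ℝ), dP x + dQ x ≠ ⊤ :=
    ae_of_all _ fun x =>
      ENNReal.add_ne_top.mpr ⟨ENNReal.ofReal_ne_top, ENNReal.ofReal_ne_top⟩
  have hac : (P + Q) ≪ (volume : Measure ℝ) := by
    rw [hPQ]; exact withDensity_absolutelyContinuous _ _
  have hP_rn : P.rnDeriv (P + Q) =ᵐ[volume] fun x => (dP x + dQ x)⁻¹ * dP x := by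
    rw [hPQ]
    have h1 := Measure.rnDeriv_withDensity_right P volume hd_meas.aemeasurable
      hS_ne_zero hS_ne_top
    have h2 := rnDeriv_gaussianReal mP (σP ^ 2).toNNReal
    filter_upwards [h1, h2] with x h1x h2x
    rw [h1x, h2x]
  have hQ_rn : Q.rnDeriv (P + Q) =ᵐ[volume] fun x => (dP x + dQ x)⁻¹ * dQ x := by
    rw [hPQ]
    have h1 := Measure.rnDeriv_withDensity_right Q volume hd_meas.aemeasurable
      hS_ne_zero hS_ne_top
    have h2 := rnDeriv_gaussianReal mQ (σQ ^ 2).toNNReal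
    filter_upwards [h1, h2] with x h1x h2x
    rw [h1x, h2x]
  have hcongr : ∫ x, (Real.sqrt ((P.rnDeriv (P + Q)) x).toReal
        - Real.sqrt ((Q.rnDeriv (P + Q)) x).toReal) ^ 2 ∂(P + Q)
      = ∫ x, (Real.sqrt (((dP x + dQ x)⁻¹ * dP x).toReal)
        - Real.sqrt (((dP x + dQ x)⁻¹ * dQ x).toReal)) ^ 2 ∂(P + Q) := by
    refine integral_congr_ae ?_
    filter_upwards [hac.ae_eq hP_rn, hac.ae_eq hQ_rn] with x h1 h2
    rw [h1, h2]
  have hPQ' : P + Q = volume.withDensity (fun x => ((fP x + fQ x).toNNReal : ℝ≥0∞)) := by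
    rw [hPQ]
    congr 1
    funext x
    simp only [hdP, hdQ, gaussianPDF]
    rw [← ENNReal.ofReal_add (gaussianPDFReal_nonneg _ _ _) (gaussianPDFReal_nonneg _ _ _)]
    rfl
  have hmeas' : Measurable (fun x => (fP x + fQ x).toNNReal) :=
    ((measurable_gaussianPDFReal _ _).add (measurable_gaussianPDFReal _ _)).real_toNNReal
  have hpoint : ∀ x : ℝ, ((fP x + fQ x).toNNReal : ℝ≥0) •
        (Real.sqrt (((dP x + dQ x)⁻¹ * dP x).toReal)
          - Real.sqrt (((dP x + dQ x)⁻¹ * dQ x).toReal)) ^ 2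
      = (Real.sqrt (fP x) - Real.sqrt (fQ x)) ^ 2 := by
    intro x
    have hfPx : 0 ≤ fP x := gaussianPDFReal_nonneg _ _ _
    have hfQx : 0 ≤ fQ x := gaussianPDFReal_nonneg _ _ _
    have hsx : 0 < fP x + fQ x := by
      have := gaussianPDFReal_pos mP (σP ^ 2).toNNReal x hvP
      rw [← hfP] at this
      linarith
    have hsum : dP x + dQ x = ENNReal.ofReal (fP x + fQ x) := by
      rw [ENNReal.ofReal_add hfPx hfQx]; rfl
    have htP : ((dP x + dQ x)⁻¹ * dP x).toReal = (fP x + fQ x)⁻¹ * fP x := by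
      rw [hsum, ENNReal.toReal_mul, ENNReal.toReal_inv, ENNReal.toReal_ofReal hsx.le,
        hdP, gaussianPDF, ENNReal.toReal_ofReal hfPx]
    have htQ : ((dP x + dQ x)⁻¹ * dQ x).toReal = (fP x + fQ x)⁻¹ * fQ x := by
      rw [hsum, ENNReal.toReal_mul, ENNReal.toReal_inv, ENNReal.toReal_ofReal hsx.le,
        hdQ, gaussianPDF, ENNReal.toReal_ofReal hfQx]
    rw [htP, htQ, NNReal.smul_def, Real.coe_toNNReal _ hsx.le,
      Real.sqrt_mul (inv_nonneg.mpr hsx.le), Real.sqrt_mul (inv_nonneg.mpr hsx.le),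
      show Real.sqrt (fP x + fQ x)⁻¹ * Real.sqrt (fP x)
          - Real.sqrt (fP x + fQ x)⁻¹ * Real.sqrt (fQ x)
        = Real.sqrt (fP x + fQ x)⁻¹ * (Real.sqrt (fP x) - Real.sqrt (fQ x)) by ring,
      mul_pow, Real.sq_sqrt (inv_nonneg.mpr hsx.le), smul_eq_mul, ← mul_assoc,
      mul_inv_cancel₀ hsx.ne', one_mul]
  rw [hellingerSq, hcongr, hPQ', integral_withDensity_eq_integral_smul hmeas']
  simp_rw [hpoint]
  rw [aux_expand mP mQ σP σQ hσP hσQ]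
  ring
end
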